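/- arXiv:2110.12682 — 9 statements merged into one kernel-verified Lean document; each statement's English description precedes it below -/
import Mathlib

section
/- For every nonnegative integer n, the number of integer triples (x, y, z) with x^2 + y^2 + 3z^2 = n equals the number of integer triples (x, y, z) with x^2 + 3y^2 + 3z^2 = 3n; that is, r_{1,1,3}(n) = r_{1,3,3}(3n). -/
theorem r113_eq_r133_three_mul (n : ℕ) :
    Nat.card {t : ℤ × ℤ × ℤ // t.1 ^ 2 + t.2.1 ^ 2 + 3 * t.2.2 ^ 2 = (n : ℤ)} =
      Nat.card {t : ℤ × ℤ × ℤ //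
        t.1 ^ 2 + 3 * t.2.1 ^ 2 + 3 * t.2.2 ^ 2 = 3 * (n : ℤ)} := by
  apply Nat.card_congr
  refine ⟨fun t => ⟨(3 * t.1.2.2, t.1.1, t.1.2.1), by have h := t.2; ring_nf; ring_nf at h; linarith⟩,
          fun t => ⟨(t.1.2.1, t.1.2.2, t.1.1 / 3), ?_⟩, ?_, ?_⟩
  · obtain ⟨⟨a, b, c⟩, h⟩ := t
    simp only at h ⊢
    have hdvd : (3 : ℤ) ∣ a := by
      have h3 : (3 : ℤ) ∣ a ^ 2 := ⟨n - b ^ 2 - c ^ 2, by linarith⟩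
      exact Int.Prime.dvd_pow' (by norm_num) h3
    obtain ⟨w, hw⟩ := hdvd
    subst hw
    rw [Int.mul_ediv_cancel_left _ (by norm_num)]
    nlinarith
  · rintro ⟨⟨a, b, c⟩, h⟩
    simp
  · rintro ⟨⟨a, b, c⟩, h⟩
    simp only at h ⊢
    have hdvd : (3 : ℤ) ∣ a := by
      have h3 : (3 : ℤ) ∣ a ^ 2 := ⟨n - b ^ 2 - c ^ 2, by linarith⟩
      exact Int.Prime.dvd_pow' (by norm_num) h3
    obtain ⟨w, hw⟩ := hdvd
    subst hw
    simp [Int.mul_ediv_cancel_left _ (by norm_num : (3:ℤ) ≠ 0)]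
end

section
/- For every nonnegative integer n, r_{1,1,3}(12n + 2) = 4 · A(12n + 2); that is, the number of integer triples (x, y, z) with x^2 + y^2 + 3z^2 = 12n + 2 is exactly four times the number of integer triples (x, y, z) with (6x+1)^2 + (6y+1)^2 + 12z^2 = 12n + 2. -/
/-- `A(n)`: the number of triples `(x, y, z) ∈ ℤ³` with
`(6x+1)² + (6y+1)² + 12z² = n`. -/
noncomputable def A (n : ℕ) : ℕ :=
  Nat.card {t : ℤ × ℤ × ℤ //
    (6 * t.1 + 1) ^ 2 + (6 * t.2.1 + 1) ^ 2 + 12 * t.2.2 ^ 2 = (n : ℤ)}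

private lemma zmod12_aux : ∀ u v w : ZMod 12, u ^ 2 + v ^ 2 + 3 * w ^ 2 = 2 →
    (u = 1 ∨ u = 5 ∨ u = 7 ∨ u = 11) ∧ (v = 1 ∨ v = 5 ∨ v = 7 ∨ v = 11) ∧
    (w = 0 ∨ w = 2 ∨ w = 4 ∨ w = 6 ∨ w = 8 ∨ w = 10) := by decide

private lemma emod12_of_cast {a d : ℤ} (h : (a : ZMod 12) = (d : ZMod 12)) :
    a % 12 = d % 12 :=
  (ZMod.intCast_eq_intCast_iff a d 12).mp h

private lemma key {m a b c : ℤ} (h : a ^ 2 + b ^ 2 + 3 * c ^ 2 = 12 * m + 2) :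
    (∃ x : ℤ, a = 6 * x + 1 ∨ a = -(6 * x + 1)) ∧
    (∃ y : ℤ, b = 6 * y + 1 ∨ b = -(6 * y + 1)) ∧ (∃ z : ℤ, c = 2 * z) := by
  have h12 : (a : ZMod 12) ^ 2 + (b : ZMod 12) ^ 2 + 3 * (c : ZMod 12) ^ 2 = 2 := by
    have h1 := congrArg (fun t : ℤ => (t : ZMod 12)) h
    push_cast at h1
    rw [show ((12 : ZMod 12)) = 0 by decide] at h1
    simpa using h1
  obtain ⟨ha, hb, hc⟩ := zmod12_aux _ _ _ h12
  have ha' : a % 12 = 1 ∨ a % 12 = 5 ∨ a % 12 = 7 ∨ a % 12 = 11 := by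
    rcases ha with h' | h' | h' | h'
    · have : a % 12 = 1 % 12 := (ZMod.intCast_eq_intCast_iff a 1 12).mp (by rw [h']; norm_num)
      omega
    · have : a % 12 = 5 % 12 := (ZMod.intCast_eq_intCast_iff a 5 12).mp (by rw [h']; norm_num)
      omega
    · have : a % 12 = 7 % 12 := (ZMod.intCast_eq_intCast_iff a 7 12).mp (by rw [h']; norm_num)
      omega
    · have : a % 12 = 11 % 12 := (ZMod.intCast_eq_intCast_iff a 11 12).mp (by rw [h']; norm_num)
      omega
  have hb' : b % 12 = 1 ∨ b % 12 = 5 ∨ b % 12 = 7 ∨ b % 12 = 11 := by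
    rcases hb with h' | h' | h' | h'
    · have : b % 12 = 1 % 12 := (ZMod.intCast_eq_intCast_iff b 1 12).mp (by rw [h']; norm_num)
      omega
    · have : b % 12 = 5 % 12 := (ZMod.intCast_eq_intCast_iff b 5 12).mp (by rw [h']; norm_num)
      omega
    · have : b % 12 = 7 % 12 := (ZMod.intCast_eq_intCast_iff b 7 12).mp (by rw [h']; norm_num)
      omega
    · have : b % 12 = 11 % 12 := (ZMod.intCast_eq_intCast_iff b 11 12).mp (by rw [h']; norm_num)
      omega
  have hc' : c % 2 = 0 := by
    rcases hc with h' | h' | h' | h' | h' | h'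
    · have : c % 12 = 0 % 12 := (ZMod.intCast_eq_intCast_iff c 0 12).mp (by rw [h']; norm_num)
      omega
    · have : c % 12 = 2 % 12 := (ZMod.intCast_eq_intCast_iff c 2 12).mp (by rw [h']; norm_num)
      omega
    · have : c % 12 = 4 % 12 := (ZMod.intCast_eq_intCast_iff c 4 12).mp (by rw [h']; norm_num)
      omega
    · have : c % 12 = 6 % 12 := (ZMod.intCast_eq_intCast_iff c 6 12).mp (by rw [h']; norm_num)
      omega
    · have : c % 12 = 8 % 12 := (ZMod.intCast_eq_intCast_iff c 8 12).mp (by rw [h']; norm_num)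
      omega
    · have : c % 12 = 10 % 12 := (ZMod.intCast_eq_intCast_iff c 10 12).mp (by rw [h']; norm_num)
      omega
  refine ⟨?_, ?_, ⟨c / 2, by omega⟩⟩
  · rcases ha' with h' | h' | h' | h'
    · exact ⟨(a - 1) / 6, Or.inl (by omega)⟩
    · exact ⟨(-1 - a) / 6, Or.inr (by omega)⟩
    · exact ⟨(a - 1) / 6, Or.inl (by omega)⟩
    · exact ⟨(-1 - a) / 6, Or.inr (by omega)⟩
  · rcases hb' with h' | h' | h' | h'
    · exact ⟨(b - 1) / 6, Or.inl (by omega)⟩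
    · exact ⟨(-1 - b) / 6, Or.inr (by omega)⟩
    · exact ⟨(b - 1) / 6, Or.inl (by omega)⟩
    · exact ⟨(-1 - b) / 6, Or.inr (by omega)⟩

theorem r113_eq_four_mul_A (n : ℕ) :
    Nat.card {t : ℤ × ℤ × ℤ //
        t.1 ^ 2 + t.2.1 ^ 2 + 3 * t.2.2 ^ 2 = ((12 * n + 2 : ℕ) : ℤ)} =
      4 * A (12 * n + 2) := by
  have hN : ((12 * n + 2 : ℕ) : ℤ) = 12 * (n : ℤ) + 2 := by push_cast; ring
  let f : (Bool × Bool) × {t : ℤ × ℤ × ℤ //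
      (6 * t.1 + 1) ^ 2 + (6 * t.2.1 + 1) ^ 2 + 12 * t.2.2 ^ 2 = ((12 * n + 2 : ℕ) : ℤ)} →
      {t : ℤ × ℤ × ℤ //
        t.1 ^ 2 + t.2.1 ^ 2 + 3 * t.2.2 ^ 2 = ((12 * n + 2 : ℕ) : ℤ)} :=
    fun p => ⟨((if p.1.1 then 1 else -1) * (6 * p.2.1.1 + 1),
               (if p.1.2 then 1 else -1) * (6 * p.2.1.2.1 + 1),
               2 * p.2.1.2.2), by
      obtain ⟨⟨s, t⟩, ⟨⟨x, y, z⟩, h⟩⟩ := p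
      rcases s <;> rcases t <;> simp only [Bool.false_eq_true, if_true, if_false] <;>
        linear_combination h⟩
  have hf : Function.Bijective f := by
    constructor
    · rintro ⟨⟨s, t⟩, ⟨⟨x, y, z⟩, h⟩⟩ ⟨⟨s', t'⟩, ⟨⟨x', y', z'⟩, h'⟩⟩ heq
      simp only [f, Subtype.mk.injEq, Prod.mk.injEq] at heq ⊢
      obtain ⟨h1, h2, h3⟩ := heq
      rcases s <;> rcases s' <;> rcases t <;> rcases t' <;>
        simp_all <;> omega
    · rintro ⟨⟨a, b, c⟩, h⟩
      obtain ⟨⟨x, hx⟩, ⟨y, hy⟩, ⟨z, hz⟩⟩ := key (h.trans hN)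
      subst hz
      rcases hx with hx | hx <;> rcases hy with hy | hy <;> subst hx <;> subst hy
      · exact ⟨((true, true), ⟨(x, y, z), by linear_combination h⟩),
          Subtype.ext (by simp [f])⟩
      · exact ⟨((true, false), ⟨(x, y, z), by linear_combination h⟩),
          Subtype.ext (by simp [f])⟩
      · exact ⟨((false, true), ⟨(x, y, z), by linear_combination h⟩),
          Subtype.ext (by simp [f])⟩
      · exact ⟨((false, false), ⟨(x, y, z), by linear_combination h⟩),
          Subtype.ext (by simp [f])⟩
  calc Nat.card {t : ℤ × ℤ × ℤ //
        t.1 ^ 2 + t.2.1 ^ 2 + 3 * t.2.2 ^ 2 = ((12 * n + 2 : ℕ) : ℤ)}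
      = Nat.card ((Bool × Bool) × {t : ℤ × ℤ × ℤ //
        (6 * t.1 + 1) ^ 2 + (6 * t.2.1 + 1) ^ 2 + 12 * t.2.2 ^ 2 = ((12 * n + 2 : ℕ) : ℤ)}) :=
        (Nat.card_eq_of_bijective f hf).symm
    _ = 4 * A (12 * n + 2) := by
        rw [Nat.card_prod, Nat.card_prod, Nat.card_eq_fintype_card (α := Bool)]
        simp [A]
end

section
/- Let p be a prime with p ≡ 5 or 7 (mod 8) such that 2p ≡ 2 (mod 12) (equivalently p ≡ 1 (mod 6)). Then A(2p) ≡ 2 (mod 4). -/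
/-! ### Auxiliary algebraic lemmas -/

lemma sq_eq_sq_int {a b : ℤ} (h : a^2 = b^2) : a = b ∨ a = -b := by
  have h2 : (a - b) * (a + b) = 0 := by ring_nf; linarith
  rcases mul_eq_zero.mp h2 with h3 | h3
  · left; linarith
  · right; linarith

lemma one_le_sq_of_ne_zero {e : ℤ} (h : e ≠ 0) : 1 ≤ e^2 := by
  rcases h.lt_or_gt with h | h <;> nlinarith

lemma prime_not_sq (p : ℕ) (hp : p.Prime) (u : ℤ) (h : u^2 = (p:ℤ)) : False := by
  have h2 : u.natAbs ^ 2 = p := by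
    have := congrArg Int.natAbs h
    rwa [Int.natAbs_pow, Int.natAbs_natCast] at this
  have hd : u.natAbs ∣ p := ⟨u.natAbs, by rw [← h2]; ring⟩
  rcases hp.eq_one_or_self_of_dvd _ hd with h1 | h1
  · rw [h1] at h2; simp at h2; have := hp.two_le; omega
  · rw [h1] at h2; nlinarith [hp.two_le]

lemma not_sq_eq_three_mul_sq (p : ℕ) (hp : p.Prime) (hp3 : p ≠ 3) {s : ℤ}
    (h : s^2 = 3*(p:ℤ)^2) : False := by
  have h3 : Prime (3:ℤ) := Int.prime_three
  have hs : (3:ℤ) ∣ s := h3.dvd_of_dvd_pow (n := 2) ⟨(p:ℤ)^2, h⟩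
  obtain ⟨f, hf⟩ := hs
  subst hf
  have h9 : 9*f^2 = 3*(p:ℤ)^2 := by linear_combination h
  have h2 : (p:ℤ)^2 = 3*f^2 := by linarith
  have hdp : (3:ℤ) ∣ (p:ℤ) := h3.dvd_of_dvd_pow (n := 2) ⟨f^2, h2⟩
  have : (3:ℕ) ∣ p := by exact_mod_cast hdp
  exact hp3 ((Nat.prime_dvd_prime_iff_eq Nat.prime_three hp).mp this).symm

/-! ### Uniqueness of representations -/

/-- Uniqueness of representation `p = a² + 6b²` up to signs. -/
lemma sq_add_six_sq_unique (p : ℕ) (hp : p.Prime) {a b c d : ℤ}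
    (h1 : a^2 + 6*b^2 = p) (h2 : c^2 + 6*d^2 = p) :
    a^2 = c^2 ∧ b^2 = d^2 := by
  have hq : Prime (p : ℤ) := Nat.prime_iff_prime_int.mp hp
  have hq0 : (p : ℤ) ≠ 0 := by exact_mod_cast hp.ne_zero
  have hp2 : (2:ℤ) ≤ p := by exact_mod_cast hp.two_le
  have key : (p : ℤ) ∣ (a*d - b*c) * (a*d + b*c) :=
    ⟨d^2 - b^2, by linear_combination d^2 * h1 - b^2 * h2⟩
  have hac : a^2 = c^2 := by
    rcases hq.dvd_mul.mp key with h | h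
    · obtain ⟨e, he⟩ := h
      have hid : ((p:ℤ))^2 = (a*c + 6*b*d)^2 + 6*((p:ℤ)*e)^2 := by
        rw [← he]; linear_combination (-(c^2+6*d^2))*h1 - (p:ℤ)*h2
      have he0 : e = 0 := by
        by_contra h0
        have h1e := one_le_sq_of_ne_zero h0
        nlinarith [sq_nonneg (a*c + 6*b*d)]
      rw [he0, mul_zero] at he
      have had : a*d = b*c := by linarith
      have : (p:ℤ) * a^2 = (p:ℤ) * c^2 := by
        linear_combination (-(a^2))*h2 + c^2*h1 + (6*(a*d+b*c))*had
      exact mul_left_cancel₀ hq0 this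
    · obtain ⟨e, he⟩ := h
      have hid : ((p:ℤ))^2 = (a*c - 6*b*d)^2 + 6*((p:ℤ)*e)^2 := by
        rw [← he]; linear_combination (-(c^2+6*d^2))*h1 - (p:ℤ)*h2
      have he0 : e = 0 := by
        by_contra h0
        have h1e := one_le_sq_of_ne_zero h0
        nlinarith [sq_nonneg (a*c - 6*b*d)]
      rw [he0, mul_zero] at he
      have had : a*d = -(b*c) := by linarith
      have : (p:ℤ) * a^2 = (p:ℤ) * c^2 := by
        linear_combination (-(a^2))*h2 + c^2*h1 + (6*(a*d-b*c))*had
      exact mul_left_cancel₀ hq0 this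
  refine ⟨hac, ?_⟩
  have h6 : (6:ℤ) * b^2 = 6 * d^2 := by linarith [hac]
  linarith

/-- Uniqueness of `2p = a² + b²` up to signs and swap. -/
lemma two_sq_unique (p : ℕ) (hp : p.Prime) (hp3 : p ≠ 3) {a b c d : ℤ}
    (h1 : a^2 + b^2 = 2*p) (h2 : c^2 + d^2 = 2*p) :
    (a^2 = c^2 ∧ b^2 = d^2) ∨ (a^2 = d^2 ∧ b^2 = c^2) := by
  have hq : Prime (p : ℤ) := Nat.prime_iff_prime_int.mp hp
  have hp2 : (2:ℤ) ≤ p := by exact_mod_cast hp.two_le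
  have hq0 : (2*(p:ℤ)) ≠ 0 := by positivity
  have key : (p : ℤ) ∣ (a*d - b*c) * (a*d + b*c) :=
    ⟨2*(d^2 - b^2), by linear_combination d^2 * h1 - b^2 * h2⟩
  rcases hq.dvd_mul.mp key with h | h
  · obtain ⟨e, he⟩ := h
    have hid : 4*((p:ℤ))^2 = (a*c + b*d)^2 + ((p:ℤ)*e)^2 := by
      rw [← he]; linear_combination (-(c^2+d^2))*h1 - 2*(p:ℤ)*h2
    have hel : -2 ≤ e := by nlinarith [sq_nonneg (a*c + b*d), sq_nonneg (e+2)]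
    have heu : e ≤ 2 := by nlinarith [sq_nonneg (a*c + b*d), sq_nonneg (e-2)]
    interval_cases e
    · have hX : a*c + b*d = 0 := by nlinarith
      right
      have hcb : 2*(p:ℤ) * c^2 = 2*(p:ℤ) * b^2 := by
        linear_combination (-(c^2))*h1 + b^2*h2 + (a*c - b*d)*hX
      have hcb' : c^2 = b^2 := mul_left_cancel₀ hq0 hcb
      exact ⟨by linarith, by linarith⟩
    · exact absurd (show (a*c + b*d)^2 = 3*(p:ℤ)^2 by nlinarith)
        (fun hh => not_sq_eq_three_mul_sq p hp hp3 hh)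
    · have had : a*d = b*c := by linarith
      left
      have hac : 2*(p:ℤ) * a^2 = 2*(p:ℤ) * c^2 := by
        linear_combination (-(a^2))*h2 + c^2*h1 + (a*d + b*c)*had
      have hac' : a^2 = c^2 := mul_left_cancel₀ hq0 hac
      exact ⟨hac', by linarith⟩
    · exact absurd (show (a*c + b*d)^2 = 3*(p:ℤ)^2 by nlinarith)
        (fun hh => not_sq_eq_three_mul_sq p hp hp3 hh)
    · have hX : a*c + b*d = 0 := by nlinarith
      right
      have hcb : 2*(p:ℤ) * c^2 = 2*(p:ℤ) * b^2 := by
        linear_combination (-(c^2))*h1 + b^2*h2 + (a*c - b*d)*hX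
      have hcb' : c^2 = b^2 := mul_left_cancel₀ hq0 hcb
      exact ⟨by linarith, by linarith⟩
  · obtain ⟨e, he⟩ := h
    have hid : 4*((p:ℤ))^2 = (a*c - b*d)^2 + ((p:ℤ)*e)^2 := by
      rw [← he]; linear_combination (-(c^2+d^2))*h1 - 2*(p:ℤ)*h2
    have hel : -2 ≤ e := by nlinarith [sq_nonneg (a*c - b*d), sq_nonneg (e+2)]
    have heu : e ≤ 2 := by nlinarith [sq_nonneg (a*c - b*d), sq_nonneg (e-2)]
    interval_cases e
    · have hX : a*c - b*d = 0 := by nlinarith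
      right
      have hcb : 2*(p:ℤ) * c^2 = 2*(p:ℤ) * b^2 := by
        linear_combination (-(c^2))*h1 + b^2*h2 + (a*c + b*d)*hX
      have hcb' : c^2 = b^2 := mul_left_cancel₀ hq0 hcb
      exact ⟨by linarith, by linarith⟩
    · exact absurd (show (a*c - b*d)^2 = 3*(p:ℤ)^2 by nlinarith)
        (fun hh => not_sq_eq_three_mul_sq p hp hp3 hh)
    · have had : a*d = -(b*c) := by linarith
      left
      have hac : 2*(p:ℤ) * a^2 = 2*(p:ℤ) * c^2 := by
        linear_combination (-(a^2))*h2 + c^2*h1 + (a*d - b*c)*had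
      have hac' : a^2 = c^2 := mul_left_cancel₀ hq0 hac
      exact ⟨hac', by linarith⟩
    · exact absurd (show (a*c - b*d)^2 = 3*(p:ℤ)^2 by nlinarith)
        (fun hh => not_sq_eq_three_mul_sq p hp hp3 hh)
    · have hX : a*c - b*d = 0 := by nlinarith
      right
      have hcb : 2*(p:ℤ) * c^2 = 2*(p:ℤ) * b^2 := by
        linear_combination (-(c^2))*h1 + b^2*h2 + (a*c + b*d)*hX
      have hcb' : c^2 = b^2 := mul_left_cancel₀ hq0 hcb
      exact ⟨by linarith, by linarith⟩

/-! ### `-6` is a square mod `p` -/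

lemma isSquare_neg_six (p : ℕ) (hp : p.Prime) (h8 : p % 8 = 7) (h3 : p % 3 = 1) :
    IsSquare (-6 : ZMod p) := by
  haveI : Fact p.Prime := ⟨hp⟩
  have hp7 : 7 ≤ p := by omega
  have hp2 : p ≠ 2 := by omega
  have hp4 : p % 4 = 3 := by omega
  have hne : ((-6 : ℤ) : ZMod p) ≠ 0 := by
    intro h
    have hd : (p:ℤ) ∣ -6 := (ZMod.intCast_zmod_eq_zero_iff_dvd _ _).mp h
    have hd6 : (p:ℤ) ∣ 6 := (dvd_neg).mp hd
    have : p ∣ 6 := by exact_mod_cast hd6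
    have := Nat.le_of_dvd (by norm_num) this
    omega
  have hm1 : legendreSym p (-1) = -1 := by
    rw [legendreSym.at_neg_one hp2, ZMod.χ₄_nat_three_mod_four hp4]
  have h2 : legendreSym p 2 = 1 := by
    rw [legendreSym.at_two hp2, ZMod.χ₈_nat_eq_if_mod_eight]
    simp [h8, show p % 2 = 1 by omega]
  have h3p : legendreSym 3 (p : ℤ) = 1 := by
    rw [legendreSym.mod 3 (p:ℤ)]
    have hc : ((p:ℤ) % ((3:ℕ):ℤ)) = 1 := by push_cast; omega
    rw [hc]
    have h1 : ((1:ℤ) : ZMod 3) ≠ 0 := by decide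
    exact (legendreSym.eq_one_iff 3 h1).mpr (by norm_num)
  have hrec := legendreSym.quadratic_reciprocity_three_mod_four
    (p := 3) (q := p) (by norm_num) hp4
  have h3v : legendreSym p 3 = -1 := by
    rw [show ((3:ℤ)) = ((3:ℕ):ℤ) by norm_cast, hrec, h3p]
  have hmul : legendreSym p (-6) = 1 := by
    have e : (-6 : ℤ) = -1 * (2 * 3) := by norm_num
    rw [e, legendreSym.mul, legendreSym.mul, hm1, h2, h3v]
    norm_num
  have := (legendreSym.eq_one_iff p hne).mp hmul
  have e2 : ((-6 : ℤ) : ZMod p) = (-6 : ZMod p) := by push_cast; ring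
  rwa [e2] at this

/-! ### Existence of representation `p = a² + 6b²` -/

lemma no_two_three (p : ℕ) (h8 : p % 8 = 7) {s w : ℤ} (h : 2*s^2 + 3*w^2 = (p:ℤ)) :
    False := by
  have hc := congrArg (fun z : ℤ => (z : ZMod 8)) h
  push_cast at hc
  rw [show ((p : ZMod 8)) = ((p % 8 : ℕ) : ZMod 8) from (ZMod.natCast_mod p 8).symm, h8] at hc
  exact (by decide : ∀ a b : ZMod 8, 2*a^2+3*b^2 ≠ ((7:ℕ) : ZMod 8)) _ _ hc

lemma no_three_two (p : ℕ) (h3 : p % 3 = 1) {s w : ℤ} (h : 3*s^2 + 2*w^2 = (p:ℤ)) :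
    False := by
  have hc := congrArg (fun z : ℤ => (z : ZMod 3)) h
  push_cast at hc
  rw [show ((p : ZMod 3)) = ((p % 3 : ℕ) : ZMod 3) from (ZMod.natCast_mod p 3).symm, h3] at hc
  exact (by decide : ∀ a b : ZMod 3, 3*a^2+2*b^2 ≠ ((1:ℕ) : ZMod 3)) _ _ hc

set_option maxHeartbeats 1000000 in
/-- Existence: a prime `p ≡ 7 (mod 8)`, `p ≡ 1 (mod 3)` is of the form `a² + 6b²`. -/
lemma exists_sq_add_six_sq (p : ℕ) (hp : p.Prime) (h8 : p % 8 = 7) (h3 : p % 3 = 1) :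
    ∃ a b : ℤ, a^2 + 6*b^2 = (p:ℤ) := by
  haveI : Fact p.Prime := ⟨hp⟩
  have hp0 : (0:ℤ) < p := by exact_mod_cast hp.pos
  obtain ⟨t, ht⟩ := isSquare_neg_six p hp h8 h3
  set r := Nat.sqrt p with hrdef
  have hrlt : r*r < p := by
    rcases Nat.lt_or_ge (r*r) p with h|h
    · exact h
    · exfalso
      have heq : r * r = p := le_antisymm (Nat.sqrt_le p) h
      have hdvd : r ∣ p := ⟨r, heq.symm⟩
      rcases (hp.eq_one_or_self_of_dvd r hdvd) with h1 | h1
      · rw [h1] at heq; simp at heq; omega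
      · rw [h1] at heq; nlinarith [hp.two_le]
  have hcard : Fintype.card (ZMod p) < Fintype.card (Fin (r+1) × Fin (r+1)) := by
    rw [ZMod.card, Fintype.card_prod, Fintype.card_fin]
    exact Nat.lt_succ_sqrt p
  obtain ⟨u, v, huv, hfe⟩ := Fintype.exists_ne_map_eq_of_card_lt
    (fun ij : Fin (r+1) × Fin (r+1) => (ij.1.1 : ZMod p) - t * (ij.2.1 : ZMod p)) hcard
  obtain ⟨x, hxdef⟩ : ∃ x : ℤ, x = (u.1.1 : ℤ) - (v.1.1 : ℤ) := ⟨_, rfl⟩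
  obtain ⟨y, hydef⟩ : ∃ y : ℤ, y = (u.2.1 : ℤ) - (v.2.1 : ℤ) := ⟨_, rfl⟩
  have hxy0 : ¬(x = 0 ∧ y = 0) := by
    rintro ⟨hx0, hy0⟩
    apply huv
    rw [hxdef] at hx0
    rw [hydef] at hy0
    have h1 : u.1.1 = v.1.1 := by
      have := sub_eq_zero.mp hx0; exact_mod_cast this
    have h2 : u.2.1 = v.2.1 := by
      have := sub_eq_zero.mp hy0; exact_mod_cast this
    exact Prod.ext (Fin.ext h1) (Fin.ext h2)
  have hu1 : (u.1.1 : ℤ) ≤ r := by exact_mod_cast Nat.lt_succ_iff.mp u.1.2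
  have hv1 : (v.1.1 : ℤ) ≤ r := by exact_mod_cast Nat.lt_succ_iff.mp v.1.2
  have hu2 : (u.2.1 : ℤ) ≤ r := by exact_mod_cast Nat.lt_succ_iff.mp u.2.2
  have hv2 : (v.2.1 : ℤ) ≤ r := by exact_mod_cast Nat.lt_succ_iff.mp v.2.2
  have hu1' : (0:ℤ) ≤ u.1.1 := Int.natCast_nonneg _
  have hv1' : (0:ℤ) ≤ v.1.1 := Int.natCast_nonneg _
  have hu2' : (0:ℤ) ≤ u.2.1 := Int.natCast_nonneg _
  have hv2' : (0:ℤ) ≤ v.2.1 := Int.natCast_nonneg _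
  have hxb : x^2 ≤ (r:ℤ)*r := by rw [hxdef]; nlinarith
  have hyb : y^2 ≤ (r:ℤ)*r := by rw [hydef]; nlinarith
  have hrp : ((r:ℤ))*r < p := by exact_mod_cast hrlt
  have key : ((x^2 + 6*y^2 : ℤ) : ZMod p) = 0 := by
    have hz : ((u.1.1 : ZMod p) - (v.1.1 : ZMod p))
        = t * ((u.2.1 : ZMod p) - (v.2.1 : ZMod p)) := by
      have := hfe
      linear_combination this
    rw [hxdef, hydef]
    push_cast
    rw [hz]
    linear_combination (-(((u.2.1 : ZMod p) - (v.2.1 : ZMod p))^2)) * ht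
  have hdvd : (p:ℤ) ∣ x^2 + 6*y^2 := (ZMod.intCast_zmod_eq_zero_iff_dvd _ _).mp key
  obtain ⟨k, hk⟩ := hdvd
  have hpos : 0 < x^2 + 6*y^2 := by
    rcases not_and_or.mp hxy0 with h|h
    · nlinarith [one_le_sq_of_ne_zero h, sq_nonneg y]
    · nlinarith [one_le_sq_of_ne_zero h, sq_nonneg x]
  clear hfe huv hcard key ht hxy0 hxdef hydef hu1 hv1 hu2 hv2 hu1' hv1' hu2' hv2' hrlt hrdef
  clear t u v
  have hk1 : 1 ≤ k := by
    have hpk : 0 < (p:ℤ)*k := hk ▸ hpos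
    rcases mul_pos_iff.mp hpk with ⟨_, h⟩ | ⟨h, _⟩
    · linarith
    · linarith
  have hk6 : k ≤ 6 := by
    have h7 : (p:ℤ)*k < (p:ℤ)*7 := by linarith
    have := (mul_lt_mul_iff_right₀ hp0).mp h7
    linarith
  interval_cases k
  · exact ⟨x, y, by linarith⟩
  · exfalso
    rcases Int.even_or_odd x with ⟨w, hw⟩ | ⟨w, hw⟩
    · subst hw
      exact no_two_three p h8 (show 2*w^2+3*y^2 = (p:ℤ) by linarith)
    · subst hw
      have : (2:ℤ) ∣ 1 := ⟨(p:ℤ) - 2*w^2 - 2*w - 3*y^2, by linarith⟩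
      norm_num at this
  · exfalso
    have h3x : (3:ℤ) ∣ x :=
      Int.prime_three.dvd_of_dvd_pow (n := 2) ⟨(p:ℤ) - 2*y^2, by linarith⟩
    obtain ⟨w, hw⟩ := h3x
    subst hw
    exact no_three_two p h3 (show 3*w^2+2*y^2 = (p:ℤ) by linarith)
  · rcases Int.even_or_odd x with ⟨w, hw⟩ | ⟨w, hw⟩
    · subst hw
      have h2 : 2*w^2 + 3*y^2 = 2*(p:ℤ) := by linarith
      rcases Int.even_or_odd y with ⟨s, hs⟩ | ⟨s, hs⟩
      · subst hs
        exact ⟨w, s, by linarith⟩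
      · exfalso
        subst hs
        have : (2:ℤ) ∣ 3 := ⟨(p:ℤ) - w^2 - 6*s^2 - 6*s, by linarith⟩
        norm_num at this
    · exfalso
      subst hw
      have : (2:ℤ) ∣ 1 := ⟨2*(p:ℤ) - 2*w^2 - 2*w - 3*y^2, by linarith⟩
      norm_num at this
  · exfalso
    have h5 : Prime (5:ℤ) := by norm_num
    have hdvd5 : (5:ℤ) ∣ (x - 3*y) * (x + 3*y) := ⟨(p:ℤ) - 3*y^2, by linarith⟩
    rcases h5.dvd_mul.mp hdvd5 with h | h
    · obtain ⟨s, hs⟩ := h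
      have h25 : 2*(5*s)^2 + 3*(x + 2*y)^2 = 25*(p:ℤ) := by
        rw [← hs]; linarith [sq_nonneg (x-3*y), sq_nonneg (x+2*y)]
      have hv5 : (5:ℤ) ∣ (x + 2*y) := by
        have hd : (5:ℤ) ∣ 3*(x+2*y)^2 := ⟨5*(p:ℤ) - 10*s^2, by linarith⟩
        rcases h5.dvd_mul.mp hd with h'|h'
        · norm_num at h'
        · exact h5.dvd_of_dvd_pow h'
      obtain ⟨w, hw⟩ := hv5
      rw [hw] at h25
      exact no_two_three p h8 (show 2*s^2+3*w^2 = (p:ℤ) by linarith)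
    · obtain ⟨s, hs⟩ := h
      have h25 : 2*(5*s)^2 + 3*(x - 2*y)^2 = 25*(p:ℤ) := by
        rw [← hs]; linarith [sq_nonneg (x+3*y), sq_nonneg (x-2*y)]
      have hv5 : (5:ℤ) ∣ (x - 2*y) := by
        have hd : (5:ℤ) ∣ 3*(x-2*y)^2 := ⟨5*(p:ℤ) - 10*s^2, by linarith⟩
        rcases h5.dvd_mul.mp hd with h'|h'
        · norm_num at h'
        · exact h5.dvd_of_dvd_pow h'
      obtain ⟨w, hw⟩ := hv5
      rw [hw] at h25
      exact no_two_three p h8 (show 2*s^2+3*w^2 = (p:ℤ) by linarith)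
  · rcases Int.even_or_odd x with ⟨w, hw⟩ | ⟨w, hw⟩
    · subst hw
      have h2 : 2*w^2 + 3*y^2 = 3*(p:ℤ) := by linarith
      have hd : (3:ℤ) ∣ 2*w^2 := ⟨(p:ℤ) - y^2, by linarith⟩
      have h3w : (3:ℤ) ∣ w := by
        rcases Int.prime_three.dvd_mul.mp hd with h'|h'
        · norm_num at h'
        · exact Int.prime_three.dvd_of_dvd_pow h'
      obtain ⟨s, hs⟩ := h3w
      subst hs
      exact ⟨y, s, by linarith⟩
    · exfalso
      subst hw
      have : (2:ℤ) ∣ 1 := ⟨3*(p:ℤ) - 2*w^2 - 2*w - 3*y^2, by linarith⟩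
      norm_num at this


def solSet (n : ℕ) : Set (ℤ × ℤ × ℤ) :=
  {t | (6 * t.1 + 1) ^ 2 + (6 * t.2.1 + 1) ^ 2 + 12 * t.2.2 ^ 2 = (n : ℤ)}

lemma mem_solSet {n : ℕ} {t : ℤ × ℤ × ℤ} :
    t ∈ solSet n ↔ (6 * t.1 + 1) ^ 2 + (6 * t.2.1 + 1) ^ 2 + 12 * t.2.2 ^ 2 = (n : ℤ) :=
  Iff.rfl

lemma A_eq_ncard (n : ℕ) : A n = (solSet n).ncard := by
  rw [A, ← Nat.card_coe_set_eq]
  rfl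

lemma one_le_sq_6x1 (x : ℤ) : 1 ≤ (6*x+1)^2 := by
  rcases le_or_gt 0 x with h | h
  · nlinarith
  · have h1 : 0 ≤ (-x-1)*(-x) := mul_nonneg (by linarith) (by linarith)
    nlinarith

lemma solSet_finite (n : ℕ) : (solSet n).Finite := by
  apply Set.Finite.subset
    (((Set.finite_Icc (-(n:ℤ)) n).prod ((Set.finite_Icc (-(n:ℤ)) n).prod
      (Set.finite_Icc (-(n:ℤ)) n))))
  rintro ⟨x, y, z⟩ h
  rw [mem_solSet] at h
  simp only at h
  have hx2 : (6*x+1)^2 ≤ (n:ℤ) := by nlinarith [one_le_sq_6x1 y, sq_nonneg z]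
  have hy2 : (6*y+1)^2 ≤ (n:ℤ) := by nlinarith [one_le_sq_6x1 x, sq_nonneg z]
  have hz2 : 12*z^2 ≤ (n:ℤ) := by nlinarith [one_le_sq_6x1 x, one_le_sq_6x1 y]
  have hn1 : 1 ≤ (n:ℤ) := le_trans (one_le_sq_6x1 x) hx2
  have hxb : -(n:ℤ) ≤ x ∧ x ≤ n := by
    constructor
    · rcases le_or_gt 0 x with h0 | h0
      · linarith
      · have h1 : 0 ≤ (-x-1)*(-x) := mul_nonneg (by linarith) (by linarith)
        nlinarith
    · rcases le_or_gt x 0 with h0 | h0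
      · linarith
      · have h1 : 0 ≤ (x-1)*x := mul_nonneg (by linarith) (by linarith)
        nlinarith
  have hyb : -(n:ℤ) ≤ y ∧ y ≤ n := by
    constructor
    · rcases le_or_gt 0 y with h0 | h0
      · linarith
      · have h1 : 0 ≤ (-y-1)*(-y) := mul_nonneg (by linarith) (by linarith)
        nlinarith
    · rcases le_or_gt y 0 with h0 | h0
      · linarith
      · have h1 : 0 ≤ (y-1)*y := mul_nonneg (by linarith) (by linarith)
        nlinarith
  have hzb : -(n:ℤ) ≤ z ∧ z ≤ n := by
    constructor
    · rcases le_or_gt 0 z with h0 | h0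
      · linarith
      · have h1 : 0 ≤ (-z-1)*(-z) := mul_nonneg (by linarith) (by linarith)
        nlinarith
    · rcases le_or_gt z 0 with h0 | h0
      · linarith
      · have h1 : 0 ≤ (z-1)*z := mul_nonneg (by linarith) (by linarith)
        nlinarith
  exact ⟨Set.mem_Icc.mpr hxb, Set.mem_Icc.mpr hyb, Set.mem_Icc.mpr hzb⟩

lemma ncard_split {T T₁ T₂ : Set (ℤ×ℤ×ℤ)} (hT : T.Finite)
    (hU : T = T₁ ∪ T₂) (hdisj : Disjoint T₁ T₂)
    {f : ℤ×ℤ×ℤ → ℤ×ℤ×ℤ} (hinj : Function.Injective f) (him : T₂ = f '' T₁) :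
    T.ncard = 2 * T₁.ncard := by
  have h1 : T₁.Finite := hT.subset (by rw [hU]; exact Set.subset_union_left)
  have h2 : T₂.Finite := hT.subset (by rw [hU]; exact Set.subset_union_right)
  rw [hU, Set.ncard_union_eq hdisj h1 h2, him, Set.ncard_image_of_injective _ hinj]
  ring

lemma sd_mod_four (n : ℕ) :
    ({t ∈ solSet n | t.1 ≠ t.2.1 ∧ t.2.2 ≠ 0}).ncard % 4 = 0 := by
  have hfin := solSet_finite n
  have h1 : ({t ∈ solSet n | t.1 ≠ t.2.1 ∧ t.2.2 ≠ 0}).ncard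
      = 2 * ({t ∈ solSet n | t.1 ≠ t.2.1 ∧ 0 < t.2.2}).ncard := by
    apply ncard_split (hfin.subset (Set.sep_subset _ _))
      (T₂ := {t ∈ solSet n | t.1 ≠ t.2.1 ∧ t.2.2 < 0})
      (f := fun t => (t.1, t.2.1, -t.2.2))
    · ext ⟨x, y, z⟩
      simp only [Set.mem_sep_iff, mem_solSet, Set.mem_union]
      constructor
      · rintro ⟨hP, hne, hz⟩
        rcases hz.lt_or_gt with h | h
        · exact Or.inr ⟨hP, hne, h⟩
        · exact Or.inl ⟨hP, hne, h⟩
      · rintro (⟨hP, hne, hz⟩ | ⟨hP, hne, hz⟩)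
        · exact ⟨hP, hne, by simp only; intro h; simp only [h] at hz; exact lt_irrefl _ hz⟩
        · exact ⟨hP, hne, by simp only; intro h; simp only [h] at hz; exact lt_irrefl _ hz⟩
    · rw [Set.disjoint_left]
      rintro ⟨x, y, z⟩ ⟨_, _, h1⟩ ⟨_, _, h2⟩
      simp only at h1 h2
      linarith
    · rintro ⟨a1, a2, a3⟩ ⟨b1, b2, b3⟩ h
      simp only [Prod.mk.injEq, neg_inj] at h
      exact Prod.ext h.1 (Prod.ext h.2.1 h.2.2)
    · ext ⟨x, y, z⟩
      simp only [Set.mem_sep_iff, mem_solSet, Set.mem_image]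
      constructor
      · rintro ⟨hP, hne, hz⟩
        refine ⟨(x, y, -z), ⟨?_, hne, by simp only; linarith⟩, by simp⟩
        simp only at hP ⊢
        linear_combination hP
      · rintro ⟨⟨a, b, c⟩, ⟨hP, hne, hc⟩, heq⟩
        simp only [Prod.mk.injEq] at heq
        obtain ⟨rfl, rfl, h3⟩ := heq
        simp only at hP hne hc ⊢
        refine ⟨?_, hne, by linarith⟩
        rw [← h3]
        linear_combination hP
  have h2 : ({t ∈ solSet n | t.1 ≠ t.2.1 ∧ 0 < t.2.2}).ncard
      = 2 * ({t ∈ solSet n | t.1 < t.2.1 ∧ 0 < t.2.2}).ncard := by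
    apply ncard_split (hfin.subset (Set.sep_subset _ _))
      (T₂ := {t ∈ solSet n | t.2.1 < t.1 ∧ 0 < t.2.2})
      (f := fun t => (t.2.1, t.1, t.2.2))
    · ext ⟨x, y, z⟩
      simp only [Set.mem_sep_iff, mem_solSet, Set.mem_union]
      constructor
      · rintro ⟨hP, hne, hz⟩
        simp only at hne
        rcases lt_or_gt_of_ne hne with h | h
        · exact Or.inl ⟨hP, h, hz⟩
        · exact Or.inr ⟨hP, h, hz⟩
      · rintro (⟨hP, hne, hz⟩ | ⟨hP, hne, hz⟩)
        · exact ⟨hP, by simp only at hne ⊢; exact ne_of_lt hne, hz⟩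
        · exact ⟨hP, by simp only at hne ⊢; exact ne_of_gt hne, hz⟩
    · rw [Set.disjoint_left]
      rintro ⟨x, y, z⟩ ⟨_, h1, _⟩ ⟨_, h2, _⟩
      simp only at h1 h2
      linarith
    · rintro ⟨a1, a2, a3⟩ ⟨b1, b2, b3⟩ h
      simp only [Prod.mk.injEq] at h
      exact Prod.ext h.2.1 (Prod.ext h.1 h.2.2)
    · ext ⟨x, y, z⟩
      simp only [Set.mem_sep_iff, mem_solSet, Set.mem_image]
      constructor
      · rintro ⟨hP, hne, hz⟩
        refine ⟨(y, x, z), ⟨?_, by simp only at hne ⊢; exact hne, hz⟩, by simp⟩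
        simp only at hP ⊢
        linear_combination hP
      · rintro ⟨⟨a, b, c⟩, ⟨hP, hne, hc⟩, heq⟩
        simp only [Prod.mk.injEq] at heq
        obtain ⟨rfl, rfl, rfl⟩ := heq
        simp only at hP hne hc ⊢
        exact ⟨by linear_combination hP, hne, hc⟩
  omega

/-! ### Case analysis lemmas -/

lemma case5_no_diag (p : ℕ) (h8 : p % 8 = 5) (x z : ℤ) :
    (6*x+1)^2 + 6*z^2 ≠ (p:ℤ) := by
  intro h
  have hc := congrArg (fun w : ℤ => (w : ZMod 8)) h
  push_cast at hc
  rw [show ((p : ZMod 8)) = ((p % 8 : ℕ) : ZMod 8) from (ZMod.natCast_mod p 8).symm,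
    h8] at hc
  exact (by decide : ∀ a b : ZMod 8, (6*a+1)^2 + 6*b^2 ≠ ((5:ℕ) : ZMod 8)) _ _ hc

lemma case7_no_z0 (p : ℕ) (h8 : p % 8 = 7) (x y : ℤ) :
    (6*x+1)^2 + (6*y+1)^2 ≠ 2*(p:ℤ) := by
  intro h
  have hc := congrArg (fun w : ℤ => (w : ZMod 8)) h
  push_cast at hc
  rw [show ((p : ZMod 8)) = ((p % 8 : ℕ) : ZMod 8) from (ZMod.natCast_mod p 8).symm,
    h8] at hc
  exact (by decide : ∀ a b : ZMod 8, (6*a+1)^2 + (6*b+1)^2 ≠ 2*((7:ℕ) : ZMod 8)) _ _ hc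

lemma st_card_case5 (p : ℕ) (hp : p.Prime) (h8 : p % 8 = 5) (h3 : p % 3 = 1) :
    ({t ∈ solSet (2*p) | t.2.2 = 0}).ncard = 2 := by
  haveI : Fact p.Prime := ⟨hp⟩
  obtain ⟨a, b, hab⟩ := Nat.Prime.sq_add_sq (p := p) (by omega)
  have hab' : (a:ℤ)^2 + (b:ℤ)^2 = (p:ℤ) := by exact_mod_cast hab
  obtain ⟨u₀, hu₀⟩ : ∃ u : ℤ, u = (a:ℤ) + b := ⟨_, rfl⟩
  obtain ⟨v₀, hv₀⟩ : ∃ v : ℤ, v = (a:ℤ) - b := ⟨_, rfl⟩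
  have h2p : u₀^2 + v₀^2 = 2*(p:ℤ) := by rw [hu₀, hv₀]; linear_combination 2*hab'
  have hodd : u₀ % 2 = 1 := by
    by_contra h
    obtain ⟨s, hs⟩ : (2:ℤ) ∣ u₀ := by omega
    have hv2 : v₀ = 2*((a:ℤ) - s) := by omega
    rw [hs, hv2] at h2p
    have hdp : (2:ℤ) ∣ (p:ℤ) := ⟨s^2 + ((a:ℤ)-s)^2, by linarith⟩
    have : (2:ℕ) ∣ p := by exact_mod_cast hdp
    omega
  have hvodd : v₀ % 2 = 1 := by omega
  have hu3 : u₀ % 3 ≠ 0 := by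
    intro h
    obtain ⟨s, hs⟩ : (3:ℤ) ∣ u₀ := by omega
    rw [hs] at h2p
    have hc := congrArg (fun w : ℤ => (w : ZMod 3)) h2p
    push_cast at hc
    rw [show ((p : ZMod 3)) = ((p % 3 : ℕ) : ZMod 3) from (ZMod.natCast_mod p 3).symm,
      h3] at hc
    exact (by decide : ∀ s v : ZMod 3, (3*s)^2 + v^2 ≠ 2*((1:ℕ) : ZMod 3)) _ _ hc
  have hv3 : v₀ % 3 ≠ 0 := by
    intro h
    obtain ⟨s, hs⟩ : (3:ℤ) ∣ v₀ := by omega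
    rw [hs] at h2p
    have hc := congrArg (fun w : ℤ => (w : ZMod 3)) h2p
    push_cast at hc
    rw [show ((p : ZMod 3)) = ((p % 3 : ℕ) : ZMod 3) from (ZMod.natCast_mod p 3).symm,
      h3] at hc
    exact (by decide : ∀ u s : ZMod 3, u^2 + (3*s)^2 ≠ 2*((1:ℕ) : ZMod 3)) _ _ hc
  obtain ⟨u₁, hu₁6, hu₁sq⟩ : ∃ w : ℤ, w % 6 = 1 ∧ w^2 = u₀^2 := by
    rcases (by omega : u₀ % 6 = 1 ∨ u₀ % 6 = 5) with h | h
    · exact ⟨u₀, h, rfl⟩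
    · exact ⟨-u₀, by omega, by ring⟩
  obtain ⟨v₁, hv₁6, hv₁sq⟩ : ∃ w : ℤ, w % 6 = 1 ∧ w^2 = v₀^2 := by
    rcases (by omega : v₀ % 6 = 1 ∨ v₀ % 6 = 5) with h | h
    · exact ⟨v₀, h, rfl⟩
    · exact ⟨-v₀, by omega, by ring⟩
  have heq2 : u₁^2 + v₁^2 = 2*(p:ℤ) := by rw [hu₁sq, hv₁sq]; exact h2p
  obtain ⟨x₁, hx₁⟩ : ∃ x : ℤ, u₁ = 6*x+1 := ⟨(u₁-1)/6, by omega⟩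
  obtain ⟨y₁, hy₁⟩ : ∃ y : ℤ, v₁ = 6*y+1 := ⟨(v₁-1)/6, by omega⟩
  have hp3 : p ≠ 3 := by omega
  have hxyne : x₁ ≠ y₁ := by
    intro h
    have huv : u₁ = v₁ := by rw [hx₁, hy₁, h]
    apply prime_not_sq p hp u₁
    rw [← huv] at heq2
    linarith
  have hset : {t ∈ solSet (2*p) | t.2.2 = 0} = {((x₁,y₁,0):ℤ×ℤ×ℤ), (y₁,x₁,0)} := by
    ext ⟨x, y, z⟩
    simp only [Set.mem_sep_iff, mem_solSet, Set.mem_insert_iff, Set.mem_singleton_iff,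
      Prod.mk.injEq]
    constructor
    · rintro ⟨hP, hz⟩
      simp only at hP hz
      subst hz
      have heq' : (6*x+1)^2 + (6*y+1)^2 = 2*(p:ℤ) := by push_cast at hP; linarith
      rcases two_sq_unique p hp hp3 heq' heq2 with ⟨h1, h2⟩ | ⟨h1, h2⟩
      · rcases sq_eq_sq_int h1 with he | he
        · rcases sq_eq_sq_int h2 with he2 | he2
          · left; refine ⟨by omega, by omega, rfl⟩
          · exfalso; omega
        · exfalso; omega
      · rcases sq_eq_sq_int h1 with he | he
        · rcases sq_eq_sq_int h2 with he2 | he2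
          · right; refine ⟨by omega, by omega, rfl⟩
          · exfalso; omega
        · exfalso; omega
    · rintro (⟨h1, h2, h3⟩ | ⟨h1, h2, h3⟩) <;> subst h1 <;> subst h2 <;> subst h3
      · refine ⟨?_, rfl⟩
        simp only
        push_cast
        rw [← hx₁, ← hy₁]
        linarith
      · refine ⟨?_, rfl⟩
        simp only
        push_cast
        rw [← hx₁, ← hy₁]
        linarith
  rw [hset, Set.ncard_pair]
  intro h
  exact hxyne (congrArg (fun t : ℤ×ℤ×ℤ => t.1) h)

lemma ss_card_case7 (p : ℕ) (hp : p.Prime) (h8 : p % 8 = 7) (h3 : p % 3 = 1) :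
    ({t ∈ solSet (2*p) | t.1 = t.2.1}).ncard = 2 := by
  obtain ⟨a, b, hab⟩ := exists_sq_add_six_sq p hp h8 h3
  have haodd : a % 2 = 1 := by
    by_contra h
    obtain ⟨s, hs⟩ : (2:ℤ) ∣ a := by omega
    rw [hs] at hab
    have hdp : (2:ℤ) ∣ (p:ℤ) := ⟨2*s^2+3*b^2, by linarith⟩
    have : (2:ℕ) ∣ p := by exact_mod_cast hdp
    omega
  have ha3 : a % 3 ≠ 0 := by
    intro h
    obtain ⟨s, hs⟩ : (3:ℤ) ∣ a := by omega
    rw [hs] at hab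
    have hdp : (3:ℤ) ∣ (p:ℤ) := ⟨3*s^2+2*b^2, by linarith⟩
    have h3d : (3:ℕ) ∣ p := by exact_mod_cast hdp
    have := (Nat.prime_dvd_prime_iff_eq Nat.prime_three hp).mp h3d
    omega
  obtain ⟨u₁, hu₁6, hu₁sq⟩ : ∃ w : ℤ, w % 6 = 1 ∧ w^2 = a^2 := by
    rcases (by omega : a % 6 = 1 ∨ a % 6 = 5) with h | h
    · exact ⟨a, h, rfl⟩
    · exact ⟨-a, by omega, by ring⟩
  have heq1 : u₁^2 + 6*b^2 = (p:ℤ) := by rw [hu₁sq]; exact hab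
  obtain ⟨x₁, hx₁⟩ : ∃ x : ℤ, u₁ = 6*x+1 := ⟨(u₁-1)/6, by omega⟩
  have hb0 : b ≠ 0 := by
    intro h
    apply prime_not_sq p hp u₁
    rw [h] at heq1
    linarith
  have hbne : b ≠ -b := fun h => hb0 (by omega)
  have hset : {t ∈ solSet (2*p) | t.1 = t.2.1} = {((x₁,x₁,b):ℤ×ℤ×ℤ), (x₁,x₁,-b)} := by
    ext ⟨x, y, z⟩
    simp only [Set.mem_sep_iff, mem_solSet, Set.mem_insert_iff, Set.mem_singleton_iff,
      Prod.mk.injEq]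
    constructor
    · rintro ⟨hP, hxy⟩
      simp only at hP hxy
      subst hxy
      have heq' : (6*x+1)^2 + 6*z^2 = (p:ℤ) := by push_cast at hP; linarith
      obtain ⟨h1, h2⟩ := sq_add_six_sq_unique p hp heq' heq1
      rcases sq_eq_sq_int h1 with he | he
      · rcases sq_eq_sq_int h2 with he2 | he2
        · left; refine ⟨by omega, by omega, by omega⟩
        · right; refine ⟨by omega, by omega, by omega⟩
      · exfalso; omega
    · rintro (⟨h1, h2, h3⟩ | ⟨h1, h2, h3⟩) <;> subst h1 <;> subst h2 <;> subst h3
      · refine ⟨?_, rfl⟩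
        simp only
        push_cast
        rw [← hx₁]
        linarith
      · refine ⟨?_, rfl⟩
        simp only
        push_cast
        rw [← hx₁]
        linarith
  rw [hset, Set.ncard_pair]
  intro h
  exact hbne (congrArg (fun t : ℤ×ℤ×ℤ => t.2.2) h)

/-! ### Main theorem -/

theorem A_two_mul_prime_mod4_eq_two (p : ℕ) (hp : p.Prime)
    (h8 : p % 8 = 5 ∨ p % 8 = 7) (h12 : 2 * p % 12 = 2) :
    A (2 * p) % 4 = 2 := by
  have h3 : p % 3 = 1 := by omega
  have hfin := solSet_finite (2*p)
  rw [A_eq_ncard]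
  have hd4 := sd_mod_four (2*p)
  rcases h8 with h8 | h8
  · have hU : solSet (2*p) = {t ∈ solSet (2*p) | t.1 ≠ t.2.1 ∧ t.2.2 ≠ 0}
        ∪ {t ∈ solSet (2*p) | t.2.2 = 0} := by
      ext ⟨x, y, z⟩
      simp only [Set.mem_sep_iff, mem_solSet, Set.mem_union]
      constructor
      · intro hP
        by_cases hz : z = 0
        · exact Or.inr ⟨hP, hz⟩
        · refine Or.inl ⟨hP, ?_, hz⟩
          intro hxy
          simp only at hP hxy
          apply case5_no_diag p h8 x z
          rw [← hxy] at hP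
          push_cast at hP
          linarith
      · rintro (⟨h, _⟩ | ⟨h, _⟩) <;> exact h
    have hdisj : Disjoint {t ∈ solSet (2*p) | t.1 ≠ t.2.1 ∧ t.2.2 ≠ 0}
        {t ∈ solSet (2*p) | t.2.2 = 0} := by
      rw [Set.disjoint_left]
      rintro t ⟨_, _, h1⟩ ⟨_, h2⟩
      exact h1 h2
    rw [hU, Set.ncard_union_eq hdisj (hfin.subset (Set.sep_subset _ _))
      (hfin.subset (Set.sep_subset _ _))]
    have hst := st_card_case5 p hp h8 h3
    omega
  · have hU : solSet (2*p) = {t ∈ solSet (2*p) | t.1 ≠ t.2.1 ∧ t.2.2 ≠ 0}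
        ∪ {t ∈ solSet (2*p) | t.1 = t.2.1} := by
      ext ⟨x, y, z⟩
      simp only [Set.mem_sep_iff, mem_solSet, Set.mem_union]
      constructor
      · intro hP
        by_cases hxy : x = y
        · exact Or.inr ⟨hP, hxy⟩
        · refine Or.inl ⟨hP, hxy, ?_⟩
          intro hz
          simp only at hP hz
          apply case7_no_z0 p h8 x y
          rw [hz] at hP
          push_cast at hP
          linarith
      · rintro (⟨h, _⟩ | ⟨h, _⟩) <;> exact h
    have hdisj : Disjoint {t ∈ solSet (2*p) | t.1 ≠ t.2.1 ∧ t.2.2 ≠ 0}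
        {t ∈ solSet (2*p) | t.1 = t.2.1} := by
      rw [Set.disjoint_left]
      rintro t ⟨_, h1, _⟩ ⟨_, h2⟩
      exact h1 h2
    rw [hU, Set.ncard_union_eq hdisj (hfin.subset (Set.sep_subset _ _))
      (hfin.subset (Set.sep_subset _ _))]
    have hss := ss_card_case7 p hp h8 h3
    omega
end

section
/- Let p be a prime with p ≡ 1 or 3 (mod 8) such that 2p ≡ 2 (mod 12) (equivalently p ≡ 1 (mod 6)). Then A(2p) ≡ 0 (mod 4). -/
open Set

theorem Set.ncard_eq_ncard_add_two_mul_ncard_of_involutive {α : Type*} {s : Set α}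
    (hs : s.Finite) {e : α → α} (he : Function.Involutive e) (hes : ∀ t ∈ s, e t ∈ s)
    {φ : α → ℤ} (hφ : ∀ t, φ (e t) = -φ t) :
    s.ncard = {t ∈ s | φ t = 0}.ncard + 2 * {t ∈ s | 0 < φ t}.ncard := by
  have himage : e '' {t ∈ s | 0 < φ t} = {t ∈ s | φ t < 0} := by
    ext t
    constructor
    · rintro ⟨u, ⟨hu, hφu⟩, rfl⟩
      exact ⟨hes u hu, by rw [hφ]; omega⟩
    · rintro ⟨ht, hφt⟩
      exact ⟨e t, ⟨hes t ht, by rw [hφ]; omega⟩, he t⟩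
  have hsplit : s = ({t ∈ s | φ t = 0} ∪ {t ∈ s | 0 < φ t}) ∪ {t ∈ s | φ t < 0} := by
    ext t
    simp only [mem_union, mem_sep_iff]
    constructor
    · intro ht
      rcases lt_trichotomy (φ t) 0 with h | h | h <;> simp [ht, h]
    · rintro ((⟨ht, -⟩ | ⟨ht, -⟩) | ⟨ht, -⟩) <;> exact ht
  have hdisj : Disjoint {t ∈ s | φ t = 0} {t ∈ s | 0 < φ t} :=
    disjoint_left.mpr fun t h₁ h₂ => by have := h₁.2; have := h₂.2; omega
  have hdisj' : Disjoint ({t ∈ s | φ t = 0} ∪ {t ∈ s | 0 < φ t}) {t ∈ s | φ t < 0} :=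
    disjoint_left.mpr fun t h₁ h₂ => by
      rcases h₁ with h₁ | h₁ <;> · have := h₁.2; have := h₂.2; omega
  calc s.ncard = (({t ∈ s | φ t = 0} ∪ {t ∈ s | 0 < φ t}) ∪ {t ∈ s | φ t < 0}).ncard :=
        congrArg ncard hsplit
    _ = {t ∈ s | φ t = 0}.ncard + 2 * {t ∈ s | 0 < φ t}.ncard := by
      rw [ncard_union_eq hdisj' ((hs.sep _).union (hs.sep _)) (hs.sep _),
        ncard_union_eq hdisj (hs.sep _) (hs.sep _), ← himage,
        ncard_image_of_injective _ he.injective]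
      ring

def solutionSet (n : ℤ) : Set (ℤ × ℤ × ℤ) :=
  {t | (6 * t.1 + 1) ^ 2 + (6 * t.2.1 + 1) ^ 2 + 12 * t.2.2 ^ 2 = n}

theorem A_eq_ncard_solutionSet (n : ℕ) : A n = (solutionSet n).ncard := by
  rw [A, ← Nat.card_coe_set_eq]
  rfl

theorem solutionSet_finite (n : ℤ) : (solutionSet n).Finite := by
  refine (finite_Icc (-n, -n, -n) (n, n, n)).subset ?_
  rintro ⟨x, y, z⟩ (h : _ = n)
  have hx := Int.le_self_sq (6 * x + 1)
  have hx' := Int.le_self_sq (-(6 * x + 1))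
  have hy := Int.le_self_sq (6 * y + 1)
  have hy' := Int.le_self_sq (-(6 * y + 1))
  have hz := Int.le_self_sq z
  have hz' := Int.le_self_sq (-z)
  simp only [neg_sq] at hx' hy' hz'
  simp only [mem_Icc, Prod.mk_le_mk]
  refine ⟨⟨?_, ?_, ?_⟩, ?_, ?_, ?_⟩ <;>
    nlinarith [sq_nonneg (6 * x + 1), sq_nonneg (6 * y + 1), sq_nonneg z]

theorem ncard_solutionSet (n : ℤ) :
    (solutionSet n).ncard = {t ∈ solutionSet n | t.2.2 = 0}.ncard
      + 2 * {t ∈ solutionSet n | 0 < t.2.2 ∧ t.1 = t.2.1}.ncard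
      + 4 * {t ∈ solutionSet n | 0 < t.2.2 ∧ t.1 < t.2.1}.ncard := by
  have hz := ncard_eq_ncard_add_two_mul_ncard_of_involutive (solutionSet_finite n)
    (e := fun t => (t.1, t.2.1, -t.2.2)) (fun t => by simp)
    (fun t (ht : _ = n) => show _ = n by rw [← ht]; ring) (φ := fun t => t.2.2) (fun t => rfl)
  have hxy := ncard_eq_ncard_add_two_mul_ncard_of_involutive
    ((solutionSet_finite n).sep (fun t => 0 < t.2.2))
    (e := fun t => (t.2.1, t.1, t.2.2)) (fun t => rfl)
    (fun t ⟨(ht : _ = n), hz⟩ => ⟨show _ = n by rw [← ht]; ring, hz⟩)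
    (φ := fun t => t.2.1 - t.1) (fun t => by simp)
  have hdiag : {t ∈ {t ∈ solutionSet n | 0 < t.2.2} | t.2.1 - t.1 = 0} =
      {t ∈ solutionSet n | 0 < t.2.2 ∧ t.1 = t.2.1} := by
    ext t
    simp [and_assoc, sub_eq_zero, eq_comm]
  have hlt : {t ∈ {t ∈ solutionSet n | 0 < t.2.2} | 0 < t.2.1 - t.1} =
      {t ∈ solutionSet n | 0 < t.2.2 ∧ t.1 < t.2.1} := by
    ext t
    simp [and_assoc]
  rw [hz, hxy, hdiag, hlt]
  ring

theorem ne_zero_and_ne_of_mem_solutionSet {n : ℤ} (hn : n % 16 = 6) {t : ℤ × ℤ × ℤ}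
    (ht : t ∈ solutionSet n) : t.2.2 ≠ 0 ∧ t.1 ≠ t.2.1 := by
  obtain ⟨x, y, z⟩ := t
  have hcast : (6 * (x : ZMod 16) + 1) ^ 2 + (6 * (y : ZMod 16) + 1) ^ 2 + 12 * (z : ZMod 16) ^ 2
      = 6 := by
    have := congrArg (Int.cast : ℤ → ZMod 16) ht
    push_cast at this
    rw [this, (ZMod.intCast_eq_intCast_iff' n 6 16).mpr (by omega)]
    rfl
  constructor
  · rintro rfl
    have key : ∀ u v : ZMod 16, (6 * u + 1) ^ 2 + (6 * v + 1) ^ 2 ≠ 6 := by decide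
    exact key x y (by simpa using hcast)
  · intro h
    simp only at h
    subst h
    have key : ∀ u w : ZMod 16, (6 * u + 1) ^ 2 + (6 * u + 1) ^ 2 + 12 * w ^ 2 ≠ 6 := by decide
    exact key x z hcast

theorem exists_six_mul_add_one_sq_eq_sq {u : ℤ} (hu : u % 6 = 1 ∨ u % 6 = 5) :
    ∃ x : ℤ, (6 * x + 1) ^ 2 = u ^ 2 := by
  rcases hu with hu | hu
  · exact ⟨(u - 1) / 6, by rw [show 6 * ((u - 1) / 6) + 1 = u by omega]⟩
  · exact ⟨(-u - 1) / 6, by rw [show 6 * ((-u - 1) / 6) + 1 = -u by omega, neg_sq]⟩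

theorem eq_of_six_mul_add_one_sq_eq {x y : ℤ} (h : (6 * x + 1) ^ 2 = (6 * y + 1) ^ 2) :
    x = y := by
  rcases sq_eq_sq_iff_eq_or_eq_neg.mp h with h | h <;> omega

theorem six_mul_add_one_sq_ne_prime {p : ℕ} (hp : p.Prime) (x : ℤ) : (6 * x + 1) ^ 2 ≠ p :=
  fun h => (Nat.prime_iff_prime_int.mp hp).not_isSquare ⟨6 * x + 1, by rw [← h, sq]⟩

theorem emod_six_of_sq_add_sq {u v n : ℤ} (h : u ^ 2 + v ^ 2 = n) (hn : n % 12 = 2) :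
    u % 6 = 1 ∨ u % 6 = 5 := by
  have key : ∀ a b : ZMod 12, a ^ 2 + b ^ 2 = 2 → a.val % 6 = 1 ∨ a.val % 6 = 5 := by decide
  have hcast : (u : ZMod 12) ^ 2 + (v : ZMod 12) ^ 2 = 2 := by
    have := congrArg (Int.cast : ℤ → ZMod 12) h
    push_cast at this
    rw [this, (ZMod.intCast_eq_intCast_iff' n 2 12).mpr (by omega)]
    rfl
  have := key _ _ hcast
  have := ZMod.val_intCast (n := 12) u
  omega

theorem emod_six_of_sq_add_six_mul_sq {c d n : ℤ} (h : c ^ 2 + 6 * d ^ 2 = n) (hn : n % 12 = 1) :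
    c % 6 = 1 ∨ c % 6 = 5 := by
  have key : ∀ a b : ZMod 12, a ^ 2 + 6 * b ^ 2 = 1 → a.val % 6 = 1 ∨ a.val % 6 = 5 := by decide
  have hcast : (c : ZMod 12) ^ 2 + 6 * (d : ZMod 12) ^ 2 = 1 := by
    have := congrArg (Int.cast : ℤ → ZMod 12) h
    push_cast at this
    rw [this, (ZMod.intCast_eq_intCast_iff' n 1 12).mpr (by omega)]
    rfl
  have := key _ _ hcast
  have := ZMod.val_intCast (n := 12) c
  omega

theorem sq_eq_sq_and_sq_eq_sq_of_mul_eq_mul {D a b c d : ℤ}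
    (h : a ^ 2 + D * b ^ 2 = c ^ 2 + D * d ^ 2) (h0 : a ^ 2 + D * b ^ 2 ≠ 0)
    (hadbc : a * d = b * c) : a ^ 2 = c ^ 2 ∧ b ^ 2 = d ^ 2 :=
  ⟨mul_right_cancel₀ h0 (by linear_combination a ^ 2 * h + D * (a * d + b * c) * hadbc),
    mul_right_cancel₀ h0 (by linear_combination b ^ 2 * h - (a * d + b * c) * hadbc)⟩

-- Brahmagupta's identity `(ac + Dbd)² + D(ad - bc)² = m²` leaves no room for a nonzero multiple
-- `ad - bc` of `m` unless `D = 1` and `ac + Dbd = 0`.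
theorem mul_eq_mul_or_of_dvd_mul_sub_mul {D m a b c d : ℤ} (hD : 1 ≤ D)
    (h1 : a ^ 2 + D * b ^ 2 = m) (h2 : c ^ 2 + D * d ^ 2 = m) (hdvd : m ∣ a * d - b * c) :
    a * d = b * c ∨ a * c + D * (b * d) = 0 := by
  obtain ⟨k, hk⟩ := hdvd
  have hid : (a * c + D * (b * d)) ^ 2 + D * (m * k) ^ 2 = m ^ 2 := by
    rw [← hk]
    linear_combination (c ^ 2 + D * d ^ 2) * h1 + m * h2
  rcases eq_or_ne k 0 with rfl | hk0
  · left
    linarith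
  · right
    have hk1 : 0 < k ^ 2 := by positivity
    have : m ^ 2 ≤ D * (m * k) ^ 2 := by nlinarith [sq_nonneg m]
    exact pow_eq_zero_iff two_ne_zero |>.mp (le_antisymm (by linarith) (sq_nonneg _))

theorem eq_and_sq_eq_of_six_mul_add_one_sq_add_six_mul_sq {p : ℕ} (hp : p.Prime) {a b c d : ℤ}
    (h1 : (6 * a + 1) ^ 2 + 6 * b ^ 2 = p) (h2 : (6 * c + 1) ^ 2 + 6 * d ^ 2 = p) :
    a = c ∧ b ^ 2 = d ^ 2 := by
  have key : ∀ d' : ℤ, (6 * c + 1) ^ 2 + 6 * d' ^ 2 = p →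
      (p : ℤ) ∣ (6 * a + 1) * d' - b * (6 * c + 1) → a = c ∧ b ^ 2 = d' ^ 2 := by
    intro d' h2' hdvd
    rcases mul_eq_mul_or_of_dvd_mul_sub_mul (by norm_num) h1 h2' hdvd with h | h
    · have hp0 : (6 * a + 1) ^ 2 + 6 * b ^ 2 ≠ 0 := by rw [h1]; exact_mod_cast hp.ne_zero
      obtain ⟨hac, hbd⟩ := sq_eq_sq_and_sq_eq_sq_of_mul_eq_mul (h1.trans h2'.symm) hp0 h
      exact ⟨eq_of_six_mul_add_one_sq_eq hac, hbd⟩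
    · have : 6 * (6 * a * c + a + c + b * d') + 1 = 0 := by linear_combination h
      omega
  have hdvd :
      (p : ℤ) ∣ ((6 * a + 1) * d - b * (6 * c + 1)) * ((6 * a + 1) * -d - b * (6 * c + 1)) :=
    ⟨b ^ 2 - d ^ 2, by linear_combination b ^ 2 * h2 - d ^ 2 * h1⟩
  rcases (Nat.prime_iff_prime_int.mp hp).dvd_or_dvd hdvd with h | h
  · exact key d h2 h
  · simpa using key (-d) (by simpa using h2) h

theorem eq_or_eq_of_six_mul_add_one_sq_add_sq {p : ℕ} (hp : p.Prime) {a b c d : ℤ}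
    (h1 : (6 * a + 1) ^ 2 + (6 * b + 1) ^ 2 = 2 * p)
    (h2 : (6 * c + 1) ^ 2 + (6 * d + 1) ^ 2 = 2 * p) :
    a = c ∧ b = d ∨ a = d ∧ b = c := by
  have hodd : Odd p := hp.eq_two_or_odd'.resolve_left fun hp2 => by
    have : 12 * (3 * a ^ 2 + a + 3 * b ^ 2 + b) = 2 := by rw [hp2] at h1; linear_combination h1
    omega
  have hcop : IsCoprime (2 : ℤ) p := Nat.isCoprime_iff_coprime.mpr (Nat.coprime_two_left.mpr hodd)
  have key : ∀ c' d' : ℤ, (6 * c' + 1) ^ 2 + (6 * d' + 1) ^ 2 = 2 * p →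
      (p : ℤ) ∣ (6 * a + 1) * (6 * d' + 1) - (6 * b + 1) * (6 * c' + 1) → a = c' ∧ b = d' := by
    intro c' d' h2' hdvd
    have h2p : 2 * (p : ℤ) ∣ (6 * a + 1) * (6 * d' + 1) - (6 * b + 1) * (6 * c' + 1) :=
      hcop.mul_dvd ⟨3 * (6 * a * d' + a + d' - 6 * b * c' - b - c'), by ring⟩ hdvd
    rcases mul_eq_mul_or_of_dvd_mul_sub_mul le_rfl (by rw [one_mul]; exact h1)
      (by rw [one_mul]; exact h2') h2p with h | h
    · have hp0 : (6 * a + 1) ^ 2 + 1 * (6 * b + 1) ^ 2 ≠ 0 := by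
        rw [one_mul, h1]
        have := hp.pos
        omega
      obtain ⟨hac, hbd⟩ :=
        sq_eq_sq_and_sq_eq_sq_of_mul_eq_mul (by linear_combination h1 - h2') hp0 h
      exact ⟨eq_of_six_mul_add_one_sq_eq hac, eq_of_six_mul_add_one_sq_eq hbd⟩
    · have : 6 * (6 * a * c' + a + c' + 6 * b * d' + b + d') + 2 = 0 := by linear_combination h
      omega
  have hdvd : (p : ℤ) ∣ ((6 * a + 1) * (6 * d + 1) - (6 * b + 1) * (6 * c + 1)) *
      ((6 * a + 1) * (6 * c + 1) - (6 * b + 1) * (6 * d + 1)) :=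
    ⟨2 * ((6 * c + 1) * (6 * d + 1) - (6 * a + 1) * (6 * b + 1)), by
      linear_combination (6 * c + 1) * (6 * d + 1) * h1 - (6 * a + 1) * (6 * b + 1) * h2⟩
  rcases (Nat.prime_iff_prime_int.mp hp).dvd_or_dvd hdvd with h | h
  · exact Or.inl (key c d h2 h)
  · exact Or.inr (key d c (by linear_combination h2) h)

theorem exists_dvd_sq_add_six {p : ℕ} [Fact p.Prime] (hp : p % 24 = 1) :
    ∃ t : ℤ, (p : ℤ) ∣ t ^ 2 + 6 := by
  have hneg2 : IsSquare (-2 : ZMod p) := (ZMod.exists_sq_eq_neg_two_iff (by omega)).mpr (by omega)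
  have h3 : IsSquare ((3 : ℕ) : ZMod p) := by
    rw [ZMod.exists_sq_eq_prime_iff_of_mod_four_eq_one (by omega) (by norm_num),
      ← ZMod.natCast_mod, show p % 3 = 1 by omega, Nat.cast_one]
    exact IsSquare.one
  obtain ⟨r, hr⟩ := hneg2.mul h3
  refine ⟨(r.cast : ℤ), (ZMod.intCast_zmod_eq_zero_iff_dvd _ p).mp ?_⟩
  push_cast at hr ⊢
  linear_combination -hr

/-- Thue's lemma. -/
theorem exists_sq_lt_of_dvd_sub_mul {n : ℕ} (hn : ¬IsSquare n) (t : ℤ) :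
    ∃ a b : ℤ, (a ≠ 0 ∨ b ≠ 0) ∧ (n : ℤ) ∣ a - t * b ∧ a ^ 2 < n ∧ b ^ 2 < n := by
  have : NeZero n := ⟨by rintro rfl; exact hn ⟨0, rfl⟩⟩
  set r := n.sqrt
  have hr : r ^ 2 < n := (n.sqrt_le').lt_of_ne fun h => hn ⟨r, by rw [← h, sq]⟩
  obtain ⟨⟨i, j⟩, ⟨i', j'⟩, hne, heq⟩ := Fintype.exists_ne_map_eq_of_card_lt
    (fun q : Fin (r + 1) × Fin (r + 1) => ((q.1 : ℤ) - t * (q.2 : ℤ) : ZMod n))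
    (by simpa [ZMod.card, ← sq] using n.lt_succ_sqrt')
  have hsmall : ∀ u v : Fin (r + 1), ((u : ℤ) - v) ^ 2 < n := fun u v => by
    have := u.is_lt
    have := v.is_lt
    have : ((u : ℤ) - v) ^ 2 ≤ (r : ℤ) ^ 2 := by
      rw [sq_le_sq, abs_of_nonneg (Int.natCast_nonneg r)]
      exact abs_le.mpr ⟨by omega, by omega⟩
    exact this.trans_lt (by exact_mod_cast hr)
  refine ⟨i - i', j - j', ?_, ?_, hsmall i i', hsmall j j'⟩
  · by_contra! h
    exact hne (by rw [Prod.mk.injEq, Fin.ext_iff, Fin.ext_iff]; omega)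
  · refine (ZMod.intCast_zmod_eq_zero_iff_dvd _ n).mp ?_
    push_cast at heq ⊢
    linear_combination heq

theorem two_mul_sq_add_three_mul_sq_ne {n : ℤ} (hn : n % 8 = 1) (x y : ℤ) :
    2 * x ^ 2 + 3 * y ^ 2 ≠ n := by
  intro h
  have key : ∀ a b : ZMod 8, 2 * a ^ 2 + 3 * b ^ 2 ≠ 1 := by decide
  apply key x y
  have := congrArg (Int.cast : ℤ → ZMod 8) h
  push_cast at this
  rw [this, (ZMod.intCast_eq_intCast_iff' n 1 8).mpr (by omega)]
  rfl

-- For `k = 2, 3, 5` the representation descends to one of `n` by `2x² + 3y²`, the other reduced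
-- form of discriminant `-24`, which misses `1 (mod 8)`.
theorem exists_sq_add_six_mul_sq_of_eq_mul {n k a b : ℤ} (hn : n % 8 = 1) (hk1 : 1 ≤ k)
    (hk6 : k ≤ 6) (h : a ^ 2 + 6 * b ^ 2 = k * n) : ∃ c d : ℤ, c ^ 2 + 6 * d ^ 2 = n := by
  have h23 := two_mul_sq_add_three_mul_sq_ne hn
  interval_cases k
  · exact ⟨a, b, by linarith⟩
  · obtain ⟨a, rfl⟩ := Int.prime_two.dvd_of_dvd_pow (a := a) (n := 2) ⟨n - 3 * b ^ 2, by linarith⟩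
    exact absurd (by linarith) (h23 a b)
  · obtain ⟨a, rfl⟩ := Int.prime_three.dvd_of_dvd_pow (a := a) (n := 2) ⟨n - 2 * b ^ 2, by linarith⟩
    exact absurd (by linarith) (h23 b a)
  · obtain ⟨a, rfl⟩ :=
      Int.prime_two.dvd_of_dvd_pow (a := a) (n := 2) ⟨2 * n - 3 * b ^ 2, by linarith⟩
    obtain ⟨b, rfl⟩ :=
      Int.prime_two.dvd_of_dvd_pow (a := b) (n := 2) ⟨n - a ^ 2 - b ^ 2, by linarith⟩
    exact ⟨a, b, by linarith⟩
  · -- `a² ≡ 4b² (mod 5)`, so `a ≡ ±2b`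
    rcases (by norm_num : Prime (5 : ℤ)).dvd_or_dvd (a := a - 2 * b) (b := a + 2 * b)
      ⟨n - 2 * b ^ 2, by linear_combination h⟩ with ⟨m, hm⟩ | ⟨m, hm⟩
    · obtain rfl : a = 2 * b + 5 * m := by linarith
      exact absurd (by linarith) (h23 (b + m) m)
    · obtain rfl : a = 5 * m - 2 * b := by linarith
      exact absurd (by linarith) (h23 (b - m) m)
  · obtain ⟨a, rfl⟩ :=
      Int.prime_three.dvd_of_dvd_pow (a := a) (n := 2) ⟨2 * n - 2 * b ^ 2, by linarith⟩
    obtain ⟨a, rfl⟩ :=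
      Int.prime_two.dvd_of_dvd_pow (a := a) (n := 2) ⟨n - a ^ 2 - b ^ 2, by linarith⟩
    exact ⟨b, a, by linarith⟩

theorem exists_sq_add_six_mul_sq {p : ℕ} (hp : p.Prime) (hp24 : p % 24 = 1) :
    ∃ c d : ℤ, c ^ 2 + 6 * d ^ 2 = p := by
  have := Fact.mk hp
  obtain ⟨t, ht⟩ := exists_dvd_sq_add_six hp24
  obtain ⟨a, b, hab, hdvd, ha, hb⟩ := exists_sq_lt_of_dvd_sub_mul hp.prime.not_isSquare t
  obtain ⟨k, hk⟩ : (p : ℤ) ∣ a ^ 2 + 6 * b ^ 2 := by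
    rw [show a ^ 2 + 6 * b ^ 2 = (a - t * b) * (a + t * b) + b ^ 2 * (t ^ 2 + 6) by ring]
    exact dvd_add (hdvd.mul_right _) (ht.mul_left _)
  have hpos : 0 < a ^ 2 + 6 * b ^ 2 := by rcases hab with h | h <;> positivity
  refine exists_sq_add_six_mul_sq_of_eq_mul (a := a) (b := b) (k := k) (by omega) ?_ ?_
    (by linarith)
  · nlinarith
  · nlinarith

theorem exists_six_mul_add_one_sq_add_sq {p : ℕ} (hp : p.Prime) (hp12 : p % 12 = 1) :
    ∃ x y : ℤ, x ≠ y ∧ (6 * x + 1) ^ 2 + (6 * y + 1) ^ 2 = 2 * p := by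
  have := Fact.mk hp
  obtain ⟨s, t, hst⟩ := Nat.Prime.sq_add_sq (p := p) (by omega)
  have huv : ((s : ℤ) + t) ^ 2 + ((s : ℤ) - t) ^ 2 = 2 * p := by
    rw [← hst]
    push_cast
    ring
  obtain ⟨x, hx⟩ := exists_six_mul_add_one_sq_eq_sq (emod_six_of_sq_add_sq huv (by omega))
  obtain ⟨y, hy⟩ := exists_six_mul_add_one_sq_eq_sq
    (emod_six_of_sq_add_sq ((add_comm _ _).trans huv) (by omega))
  refine ⟨x, y, ?_, by rw [hx, hy, huv]⟩
  rintro rfl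
  exact six_mul_add_one_sq_ne_prime hp x (by linarith)

theorem exists_six_mul_add_one_sq_add_six_mul_sq {p : ℕ} (hp : p.Prime) (hp24 : p % 24 = 1) :
    ∃ x d : ℤ, 0 < d ∧ (6 * x + 1) ^ 2 + 6 * d ^ 2 = p := by
  obtain ⟨c, d, hcd⟩ := exists_sq_add_six_mul_sq hp hp24
  obtain ⟨x, hx⟩ := exists_six_mul_add_one_sq_eq_sq (emod_six_of_sq_add_six_mul_sq hcd (by omega))
  have hd : d ≠ 0 := by
    rintro rfl
    exact six_mul_add_one_sq_ne_prime hp x (by linarith)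
  exact ⟨x, |d|, abs_pos.mpr hd, by rw [sq_abs, hx, hcd]⟩

theorem ncard_solutionSet_two_mul_sep_eq_zero {p : ℕ} (hp : p.Prime) (hp24 : p % 24 = 1) :
    {t ∈ solutionSet (2 * p) | t.2.2 = 0}.ncard = 2 := by
  obtain ⟨x, y, hxy, h⟩ := exists_six_mul_add_one_sq_add_sq hp (by omega)
  have : {t ∈ solutionSet (2 * p) | t.2.2 = 0} = {(x, y, 0), (y, x, 0)} := by
    ext ⟨a, b, c⟩
    simp only [solutionSet, mem_ofPred_eq, mem_insert_iff, mem_singleton_iff, Prod.mk.injEq]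
    constructor
    · rintro ⟨hab, rfl⟩
      rcases eq_or_eq_of_six_mul_add_one_sq_add_sq hp (a := a) (b := b) (by linarith) h with
        ⟨rfl, rfl⟩ | ⟨rfl, rfl⟩ <;> simp
    · rintro (⟨rfl, rfl, rfl⟩ | ⟨rfl, rfl, rfl⟩) <;> exact ⟨by linarith, rfl⟩
  rw [this, ncard_pair (by simp [hxy])]

theorem ncard_solutionSet_two_mul_sep_diag {p : ℕ} (hp : p.Prime) (hp24 : p % 24 = 1) :
    {t ∈ solutionSet (2 * p) | 0 < t.2.2 ∧ t.1 = t.2.1}.ncard = 1 := by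
  obtain ⟨x, d, hd, h⟩ := exists_six_mul_add_one_sq_add_six_mul_sq hp hp24
  refine ncard_eq_one.mpr ⟨(x, x, d), ?_⟩
  ext ⟨a, b, c⟩
  simp only [solutionSet, mem_ofPred_eq, mem_singleton_iff, Prod.mk.injEq]
  constructor
  · rintro ⟨habc, hc, rfl⟩
    obtain ⟨rfl, hcd⟩ := eq_and_sq_eq_of_six_mul_add_one_sq_add_six_mul_sq hp (a := a) (b := c)
      (by linarith) h
    exact ⟨rfl, rfl, (pow_left_inj₀ hc.le hd.le two_ne_zero).mp hcd⟩
  · rintro ⟨rfl, rfl, rfl⟩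
    exact ⟨by linarith, hd, rfl⟩

theorem A_two_mul_prime_mod4_eq_zero (p : ℕ) (hp : p.Prime)
    (h8 : p % 8 = 1 ∨ p % 8 = 3) (h12 : 2 * p % 12 = 2) :
    A (2 * p) % 4 = 0 := by
  rw [A_eq_ncard_solutionSet, Nat.cast_mul, Nat.cast_ofNat, ncard_solutionSet]
  rcases h8 with h8 | h8
  · rw [ncard_solutionSet_two_mul_sep_eq_zero hp (by omega),
      ncard_solutionSet_two_mul_sep_diag hp (by omega)]
    omega
  · have h16 : 2 * (p : ℤ) % 16 = 6 := by omega
    have hz : {t ∈ solutionSet (2 * p) | t.2.2 = 0} = ∅ :=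
      sep_eq_empty_iff_mem_false.mpr fun t ht => (ne_zero_and_ne_of_mem_solutionSet h16 ht).1
    have hdiag : {t ∈ solutionSet (2 * p) | 0 < t.2.2 ∧ t.1 = t.2.1} = ∅ :=
      sep_eq_empty_iff_mem_false.mpr fun t ht h => (ne_zero_and_ne_of_mem_solutionSet h16 ht).2 h.2
    rw [hz, hdiag, ncard_empty]
    omega
end

section
/- Suppose n ≡ 2 (mod 12) and p is a prime with gcd(p, 6n) = 1. Then A(p^2 n) ≡ A(n) (mod 2). -/
open Function

private abbrev Tset (c : ℤ) := {t : ℤ × ℤ × ℤ //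
    (6 * t.1 + 1) ^ 2 + (6 * t.2.1 + 1) ^ 2 + 12 * t.2.2 ^ 2 = c}

private abbrev Uset (c : ℤ) := {x : ℤ // 2 * (6 * x + 1) ^ 2 = c}

private lemma aux_bound {x c : ℤ} (h : (6 * x + 1) ^ 2 ≤ c) : -c ≤ x ∧ x ≤ c := by
  constructor <;> nlinarith [sq_nonneg x, sq_nonneg (x+1), sq_nonneg (x-1)]

private lemma aux_bound' {z c : ℤ} (h : 12 * z ^ 2 ≤ c) : -c ≤ z ∧ z ≤ c := by
  constructor <;> nlinarith [sq_nonneg z, sq_nonneg (z+1), sq_nonneg (z-1)]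

private lemma finT (c : ℤ) : Finite (Tset c) := by
  have hsub : {t : ℤ × ℤ × ℤ |
      (6 * t.1 + 1) ^ 2 + (6 * t.2.1 + 1) ^ 2 + 12 * t.2.2 ^ 2 = c} ⊆
      (Set.Icc (-c) c) ×ˢ (Set.Icc (-c) c) ×ˢ (Set.Icc (-c) c) := by
    rintro ⟨x, y, z⟩ h
    simp only [Set.mem_setOf_eq] at h
    have h1 : (6 * x + 1) ^ 2 ≤ c := by nlinarith [sq_nonneg (6*y+1), sq_nonneg z]
    have h2 : (6 * y + 1) ^ 2 ≤ c := by nlinarith [sq_nonneg (6*x+1), sq_nonneg z]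
    have h3 : 12 * z ^ 2 ≤ c := by nlinarith [sq_nonneg (6*x+1), sq_nonneg (6*y+1)]
    exact ⟨Set.mem_Icc.2 (aux_bound h1), Set.mem_Icc.2 (aux_bound h2),
      Set.mem_Icc.2 (aux_bound' h3)⟩
  exact (Set.Finite.subset (((Set.finite_Icc _ _).prod
    ((Set.finite_Icc _ _).prod (Set.finite_Icc _ _)))) hsub).to_subtype

private lemma subsingU (c : ℤ) : Subsingleton (Uset c) := by
  constructor
  rintro ⟨a, ha⟩ ⟨b, hb⟩
  have h3 : 2 * ((6 * a + 1 - (6 * b + 1)) * (6 * a + 1 + (6 * b + 1))) = 0 := by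
    linear_combination ha - hb
  have h4 : (6 * a + 1 - (6 * b + 1)) * (6 * a + 1 + (6 * b + 1)) = 0 := by
    rcases mul_eq_zero.1 h3 with h | h
    · omega
    · exact h
  rcases mul_eq_zero.1 h4 with h | h <;> exact Subtype.ext (show a = b by omega)

/-- parity: card T c ≡ card U c mod 2 -/
private lemma parityTU (c : ℤ) : Nat.card (Tset c) ≡ Nat.card (Uset c) [MOD 2] := by
  classical
  haveI := finT c
  haveI : Fintype (Tset c) := Fintype.ofFinite _
  haveI : Fact (Nat.Prime 2) := ⟨Nat.prime_two⟩
  set f : Function.End (Tset c) := fun t =>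
    ⟨(t.1.2.1, t.1.1, -t.1.2.2), by
      have h := t.2
      ring_nf
      ring_nf at h
      linarith⟩ with hf
  have hf2 : f ^ 2 ^ 1 = 1 := by
    funext t
    show f (f t) = t
    apply Subtype.ext
    simp [hf]
  have hmod := Equiv.Perm.card_fixedPoints_modEq (α := Tset c) hf2
  -- Equiv between fixedPoints f and Uset c
  have e : f.fixedPoints ≃ Uset c := by
    refine ⟨fun t => ⟨t.1.1.1, ?_⟩, fun x => ⟨(⟨(x.1, x.1, 0), by
        linear_combination x.2⟩ : Tset c), ?_⟩, ?_, ?_⟩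
    · have h1 : ((t.1.1.2.1, t.1.1.1, -t.1.1.2.2) : ℤ × ℤ × ℤ) = t.1.1 :=
        congrArg Subtype.val t.2
      have e1 : t.1.1.2.1 = t.1.1.1 := congrArg Prod.fst h1
      have e3 : -t.1.1.2.2 = t.1.1.2.2 := congrArg (fun q => q.2.2) h1
      have h := t.1.2
      have hz : t.1.1.2.2 = 0 := by omega
      rw [e1, hz] at h
      ring_nf at h ⊢
      linarith
    · show f _ = _
      apply Subtype.ext
      show ((x.1, x.1, -(0:ℤ)) : ℤ × ℤ × ℤ) = (x.1, x.1, (0:ℤ))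
      norm_num
    · intro t
      apply Subtype.ext
      apply Subtype.ext
      have h1 : ((t.1.1.2.1, t.1.1.1, -t.1.1.2.2) : ℤ × ℤ × ℤ) = t.1.1 :=
        congrArg Subtype.val t.2
      have e1 : t.1.1.2.1 = t.1.1.1 := congrArg Prod.fst h1
      have e3 : -t.1.1.2.2 = t.1.1.2.2 := congrArg (fun q => q.2.2) h1
      show ((t.1.1.1, t.1.1.1, (0:ℤ)) : ℤ × ℤ × ℤ) = t.1.1
      refine Prod.ext_iff.mpr ⟨rfl, Prod.ext_iff.mpr ⟨e1.symm, show (0:ℤ) = t.1.1.2.2 by omega⟩⟩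
    · intro x
      apply Subtype.ext
      rfl
  calc Nat.card (Tset c) = Fintype.card (Tset c) := Nat.card_eq_fintype_card
    _ ≡ Fintype.card f.fixedPoints [MOD 2] := hmod
    _ = Nat.card (Uset c) := by rw [← Nat.card_eq_fintype_card]; exact Nat.card_congr e

private lemma lift_sq {s : ℤ} (h : (s : ZMod 6) = 1 ∨ (s : ZMod 6) = -1) :
    ∃ t : ℤ, (6 * t + 1) ^ 2 = s ^ 2 := by
  rcases h with h | h
  · have hd : (6:ℤ) ∣ s - 1 := by
      have := (ZMod.intCast_zmod_eq_zero_iff_dvd (s - 1) 6).1 (by push_cast; rw [h]; ring)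
      exact_mod_cast this
    obtain ⟨t, ht⟩ := hd
    exact ⟨t, by rw [show 6 * t + 1 = s by linarith]⟩
  · have hd : (6:ℤ) ∣ s + 1 := by
      have := (ZMod.intCast_zmod_eq_zero_iff_dvd (s + 1) 6).1 (by push_cast; rw [h]; ring)
      exact_mod_cast this
    obtain ⟨t, ht⟩ := hd
    exact ⟨-t, by rw [show 6 * (-t) + 1 = -s by linarith]; ring⟩

private lemma p_pm_one {p : ℕ} (h6 : Nat.Coprime p 6) :
    ((p : ZMod 6) = 1 ∨ (p : ZMod 6) = -1) := by
  have h2 : ¬ 2 ∣ p := fun h => by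
    have := Nat.dvd_gcd h (by norm_num : (2:ℕ) ∣ 6); rw [h6] at this; omega
  have h3 : ¬ 3 ∣ p := fun h => by
    have := Nat.dvd_gcd h (by norm_num : (3:ℕ) ∣ 6); rw [h6] at this; omega
  have h1 : p % 6 = 1 ∨ p % 6 = 5 := by omega
  have hc : ((p % 6 : ℕ) : ZMod 6) = (p : ZMod 6) := ZMod.natCast_mod p 6
  rcases h1 with h | h <;> rw [h] at hc <;> [left; right] <;> rw [← hc] <;> decide

private lemma U_nonempty_iff {p : ℕ} (hp : p.Prime) (h6 : Nat.Coprime p 6) (m : ℤ) :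
    Nonempty (Uset ((p:ℤ)^2 * m)) ↔ Nonempty (Uset m) := by
  have hp2 : p ≠ 2 := fun h => by rw [h] at h6; norm_num [Nat.Coprime] at h6
  have hpI : Prime (p : ℤ) := Nat.prime_iff_prime_int.1 hp
  have hp6 := p_pm_one h6
  constructor
  · rintro ⟨x, hx⟩
    have hdvd : (p : ℤ) ∣ 6 * x + 1 := by
      have h1 : (p : ℤ) ∣ 2 * (6 * x + 1) ^ 2 := by
        rw [hx]; exact Dvd.dvd.mul_right (dvd_pow_self _ two_ne_zero) m
      rcases hpI.dvd_mul.1 h1 with h | h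
      · exfalso
        have h2 : p ∣ 2 := by exact_mod_cast h
        have := (Nat.prime_dvd_prime_iff_eq hp Nat.prime_two).1 h2
        exact hp2 this
      · exact hpI.dvd_of_dvd_pow h
    obtain ⟨s, hs⟩ := hdvd
    have h2s : 2 * s ^ 2 = m := by
      have hpne : ((p:ℤ)^2) ≠ 0 := pow_ne_zero _ (by exact_mod_cast hp.ne_zero)
      apply mul_left_cancel₀ hpne
      rw [← hx, hs]; ring
    have hcast : (p : ZMod 6) * (s : ZMod 6) = 1 := by
      have h' := congrArg (fun z : ℤ => (z : ZMod 6)) hs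
      push_cast at h'
      rw [show ((6:ZMod 6)) = 0 by decide] at h'
      rw [← h']; ring
    have hs6 : (s : ZMod 6) = 1 ∨ (s : ZMod 6) = -1 := by
      rcases hp6 with h | h
      · left; rw [h, one_mul] at hcast; exact hcast
      · right; rw [h] at hcast; linear_combination -hcast
    obtain ⟨t, ht⟩ := lift_sq hs6
    exact ⟨t, by rw [ht]; exact h2s⟩
  · rintro ⟨x, hx⟩
    have hs6 : (((p : ℤ) * (6 * x + 1) : ℤ) : ZMod 6) = 1 ∨
        (((p : ℤ) * (6 * x + 1) : ℤ) : ZMod 6) = -1 := by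
      have : (((p : ℤ) * (6 * x + 1) : ℤ) : ZMod 6) = (p : ZMod 6) := by
        push_cast
        rw [show ((6:ZMod 6)) = 0 by decide]
        ring
      rw [this]; exact hp6
    obtain ⟨t, ht⟩ := lift_sq hs6
    exact ⟨t, by rw [ht]; ring_nf; linear_combination (p:ℤ)^2 * hx⟩

private lemma card_eq_of_subsingleton_iff {α β : Type} [Subsingleton α] [Subsingleton β]
    (h : Nonempty α ↔ Nonempty β) : Nat.card α = Nat.card β := by
  rcases isEmpty_or_nonempty α with hα | hα
  · have hβ : IsEmpty β := not_nonempty_iff.mp fun hb => (not_nonempty_iff.2 hα) (h.2 hb)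
    rw [Nat.card_of_isEmpty, Nat.card_of_isEmpty]
  · have hβ : Nonempty β := h.1 hα
    haveI : Unique α := uniqueOfSubsingleton hα.some
    haveI : Unique β := uniqueOfSubsingleton hβ.some
    rw [Nat.card_unique, Nat.card_unique]

private lemma A_aux (n p : ℕ) (hn : n % 12 = 2) (hp : p.Prime)
    (hcop : Nat.gcd p (6 * n) = 1) :
    Nat.card (Tset ((p ^ 2 * n : ℕ) : ℤ)) ≡ Nat.card (Tset ((n : ℕ) : ℤ)) [MOD 2] := by
  have h6 : Nat.Coprime p 6 := Nat.Coprime.coprime_dvd_right ⟨n, rfl⟩ hcop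
  have hcast : ((p ^ 2 * n : ℕ) : ℤ) = (p : ℤ) ^ 2 * (n : ℤ) := by push_cast; ring
  haveI := subsingU ((p:ℤ)^2 * (n:ℤ))
  haveI := subsingU ((n:ℕ) : ℤ)
  calc Nat.card (Tset ((p ^ 2 * n : ℕ) : ℤ))
      ≡ Nat.card (Uset ((p ^ 2 * n : ℕ) : ℤ)) [MOD 2] := parityTU _
    _ = Nat.card (Uset ((n:ℕ) : ℤ)) := by
        rw [hcast]
        exact card_eq_of_subsingleton_iff (U_nonempty_iff hp h6 _)
    _ ≡ Nat.card (Tset ((n : ℕ) : ℤ)) [MOD 2] := (parityTU _).symm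

theorem A_sq_mul_modEq_two (n p : ℕ) (hn : n % 12 = 2) (hp : p.Prime)
    (hcop : Nat.gcd p (6 * n) = 1) :
    A (p ^ 2 * n) ≡ A n [MOD 2] := by
  exact A_aux n p hn hp hcop
end

section
/- Suppose n ≡ 2 (mod 12) and p is a prime with gcd(p, 6n) = 1. Then A(p^3 n) is even. -/
/-- A type with a fixed-point-free involution has even `Nat.card`. -/
lemma even_natCard_of_involution {α : Type*} (f : α → α)
    (h2 : ∀ a, f (f a) = a) (hf : ∀ a, f a ≠ a) : Even (Nat.card α) := by
  by_cases hfin : Finite α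
  · classical
    have : Fintype α := Fintype.ofFinite α
    rw [Nat.card_eq_fintype_card]
    have hsum : (∑ _x : α, (1 : ZMod 2)) = 0 :=
      Finset.sum_ninvolution f (fun a => by decide)
        (fun a _ => hf a) (fun a => Finset.mem_univ _) h2
    have hcard : ((Fintype.card α : ℕ) : ZMod 2) = 0 := by
      simpa using hsum
    have : (2 : ℕ) ∣ Fintype.card α := (ZMod.natCast_eq_zero_iff _ 2).mp hcard
    exact even_iff_two_dvd.mpr this
  · have : Infinite α := not_finite_iff_infinite.mp hfin
    rw [Nat.card_eq_zero_of_infinite]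
    exact Even.zero

theorem A_cube_mul_even (n p : ℕ) (hn : n % 12 = 2) (hp : p.Prime)
    (hcop : Nat.gcd p (6 * n) = 1) :
    Even (A (p ^ 3 * n)) := by
  obtain ⟨k, hk⟩ : 2 ∣ n := by omega
  have hpk : ¬ p ∣ k := by
    intro hd
    obtain ⟨c, hc⟩ := hd
    have h1 : p ∣ 6 * n := by rw [hk, hc]; exact ⟨12 * c, by ring⟩
    have h2 : p ∣ 1 := hcop ▸ Nat.dvd_gcd dvd_rfl h1
    have := Nat.le_of_dvd one_pos h2
    have := hp.two_le
    omega
  -- the key diagonal impossibility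
  have key : ∀ x : ℤ, 2 * (6 * x + 1) ^ 2 ≠ ((p ^ 3 * n : ℕ) : ℤ) := by
    intro x hx
    set a : ℕ := (6 * x + 1).natAbs with ha
    have hsq : ((a : ℤ)) ^ 2 = (6 * x + 1) ^ 2 := by
      exact_mod_cast Int.natAbs_sq _
    have hx' : (2 * a ^ 2 : ℕ) = p ^ 3 * n := by
      have : ((2 * a ^ 2 : ℕ) : ℤ) = ((p ^ 3 * n : ℕ) : ℤ) := by
        push_cast
        rw [hsq]; exact hx
      exact_mod_cast this
    have heq : a ^ 2 = p ^ 3 * k := by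
      have : 2 * a ^ 2 = 2 * (p ^ 3 * k) := by rw [hx', hk]; ring
      omega
    have hpa : p ∣ a := hp.dvd_of_dvd_pow (n := 2)
      (heq ▸ dvd_mul_of_dvd_left (dvd_pow_self p (by norm_num)) k)
    obtain ⟨b, hb⟩ := hpa
    have heq2 : b ^ 2 = p * k := by
      have h : p ^ 2 * (b ^ 2) = p ^ 2 * (p * k) := by
        calc p ^ 2 * b ^ 2 = (p * b) ^ 2 := by ring
          _ = p ^ 3 * k := by rw [← hb]; exact heq
          _ = p ^ 2 * (p * k) := by ring
      exact Nat.eq_of_mul_eq_mul_left (pow_pos hp.pos 2) h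
    have hpb : p ∣ b := hp.dvd_of_dvd_pow (n := 2) (heq2 ▸ dvd_mul_right p k)
    obtain ⟨c, hc⟩ := hpb
    have heq3 : p * c ^ 2 = k := by
      have h : p * (p * c ^ 2) = p * k := by
        calc p * (p * c ^ 2) = (p * c) ^ 2 := by ring
          _ = p * k := by rw [← hc]; exact heq2
      exact Nat.eq_of_mul_eq_mul_left hp.pos h
    exact hpk ⟨c ^ 2, heq3.symm⟩
  apply even_natCard_of_involution
    (f := fun t : {t : ℤ × ℤ × ℤ //
        (6 * t.1 + 1) ^ 2 + (6 * t.2.1 + 1) ^ 2 + 12 * t.2.2 ^ 2 = ((p ^ 3 * n : ℕ) : ℤ)} =>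
      if h : t.1.2.2 = 0 then
        ⟨(t.1.2.1, t.1.1, t.1.2.2), by
          have := t.2; dsimp only at this ⊢; linarith⟩
      else
        ⟨(t.1.1, t.1.2.1, -t.1.2.2), by
          have := t.2; dsimp only at this ⊢; linarith [neg_sq t.1.2.2]⟩)
  · rintro ⟨⟨x, y, z⟩, ht⟩
    by_cases hz : z = 0
    · simp [hz]
    · simp [hz]
  · rintro ⟨⟨x, y, z⟩, ht⟩ hfix
    by_cases hz : z = 0
    · simp only [hz, dif_pos] at hfix
      have hxy : y = x := by
        have := congrArg (fun t => t.1.1) hfix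
        simpa using this
      subst hz
      rw [hxy] at ht
      dsimp only at ht
      exact key x (by linarith) 
    · simp only [hz, dif_neg, not_false_iff] at hfix
      have : -z = z := by
        have := congrArg (fun t => t.1.2.2) hfix
        simpa using this
      omega
end

section
/- Suppose n ≡ 2 (mod 12) and p is a prime with gcd(p, 6) = 1. Then A(p^4 n) ≡ A(n) (mod 2). -/
lemma parity_invol {α : Type*} [Finite α] (f : α → α) (hf : Function.Involutive f) :
    Nat.card α ≡ Nat.card {x : α // f x = x} [MOD 2] := by
  classical
  set F : Multiplicative (ZMod 2) → α → α :=
    fun g x => if Multiplicative.toAdd g = 0 then x else f x with hF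
  have hFone : ∀ x, F 1 x = x := fun x => by simp [hF]
  have hFmul : ∀ g h x, F (g * h) x = F g (F h x) := by
    intro g h x
    have e1 : (Multiplicative.ofAdd (1 : ZMod 2)) * (Multiplicative.ofAdd 1) = 1 := by decide
    have e2 : (Multiplicative.ofAdd (1 : ZMod 2)) ≠ 1 := by decide
    rcases (by decide : ∀ a : Multiplicative (ZMod 2), a = 1 ∨ a = Multiplicative.ofAdd 1) g
      with hg | hg <;>
    rcases (by decide : ∀ a : Multiplicative (ZMod 2), a = 1 ∨ a = Multiplicative.ofAdd 1) h
      with hh | hh <;>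
      simp [hF, hg, hh, e1, e2, hf x]
  letI : MulAction (Multiplicative (ZMod 2)) α :=
    { smul := F, one_smul := hFone, mul_smul := hFmul }
  have hsmul : ∀ (g : Multiplicative (ZMod 2)) (x : α), g • x = F g x := fun _ _ => rfl
  have hpg : IsPGroup 2 (Multiplicative (ZMod 2)) := by
    apply IsPGroup.of_card (n := 1)
    simp [Nat.card_eq_fintype_card]
  refine (hpg.card_modEq_card_fixedPoints α).trans ?_
  have hset : MulAction.fixedPoints (Multiplicative (ZMod 2)) α = {x | f x = x} := by
    ext x
    constructor
    · intro hx
      have := hx (Multiplicative.ofAdd (1 : ZMod 2))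
      rw [hsmul] at this
      simpa [hF] using this
    · intro hx g
      rw [hsmul]
      simp only [hF]
      split <;> simp_all
  rw [hset]
  rfl

lemma sol_finite (m : ℕ) :
    Set.Finite {t : ℤ × ℤ × ℤ |
      (6 * t.1 + 1) ^ 2 + (6 * t.2.1 + 1) ^ 2 + 12 * t.2.2 ^ 2 = (m : ℤ)} := by
  apply Set.Finite.subset (((Set.finite_Icc (-(m:ℤ)) m)).prod
    (((Set.finite_Icc (-(m:ℤ)) m)).prod ((Set.finite_Icc (-(m:ℤ)) m))))
  rintro ⟨x, y, z⟩ h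
  simp only [Set.mem_setOf_eq] at h
  have hm0 : (0:ℤ) ≤ (m:ℤ) := Int.natCast_nonneg m
  refine ⟨Set.mem_Icc.mpr ⟨?_, ?_⟩, Set.mem_Icc.mpr ⟨?_, ?_⟩, Set.mem_Icc.mpr ⟨?_, ?_⟩⟩ <;>
    nlinarith [sq_nonneg (6*x+1), sq_nonneg (6*y+1), sq_nonneg z, sq_nonneg x, sq_nonneg y,
      sq_nonneg (x+1), sq_nonneg (x-1), sq_nonneg (y+1), sq_nonneg (y-1),
      sq_nonneg (z+1), sq_nonneg (z-1)]

lemma A_parity (m : ℕ) :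
    A m ≡ Nat.card {x : ℤ // 2 * (6 * x + 1) ^ 2 = (m : ℤ)} [MOD 2] := by
  haveI : Finite {t : ℤ × ℤ × ℤ //
      (6 * t.1 + 1) ^ 2 + (6 * t.2.1 + 1) ^ 2 + 12 * t.2.2 ^ 2 = (m : ℤ)} :=
    (sol_finite m).to_subtype
  set S := {t : ℤ × ℤ × ℤ //
      (6 * t.1 + 1) ^ 2 + (6 * t.2.1 + 1) ^ 2 + 12 * t.2.2 ^ 2 = (m : ℤ)} with hS
  let f : S → S := fun t => ⟨(t.1.2.1, t.1.1, -t.1.2.2), by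
    have h := t.2
    dsimp only
    linear_combination h⟩
  have hf : Function.Involutive f := by
    rintro ⟨⟨x, y, z⟩, ht⟩
    apply Subtype.ext
    simp [f]
  have key := parity_invol f hf
  have hcard : Nat.card {t : S // f t = t} =
      Nat.card {x : ℤ // 2 * (6 * x + 1) ^ 2 = (m : ℤ)} := by
    apply Nat.card_congr
    refine ⟨fun t => ⟨t.1.1.1, ?_⟩, fun x => ⟨⟨(x.1, x.1, 0), by
        dsimp only
        linear_combination x.2⟩, by
        apply Subtype.ext
        simp [f]⟩, ?_, ?_⟩
    · obtain ⟨⟨⟨x, y, z⟩, ht⟩, hft⟩ := t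
      have h := congrArg Subtype.val hft
      simp only [f, Prod.mk.injEq] at h
      obtain ⟨h1, h2, h3⟩ := h
      dsimp only at ht ⊢
      have hz : z = 0 := by omega
      subst h1 hz
      linear_combination ht
    · rintro ⟨⟨⟨x, y, z⟩, ht⟩, hft⟩
      have h := congrArg Subtype.val hft
      simp only [f, Prod.mk.injEq] at h
      obtain ⟨h1, h2, h3⟩ := h
      have hz : z = 0 := by omega
      apply Subtype.ext
      apply Subtype.ext
      simp only
      subst h1 hz
      rfl
    · rintro ⟨x, hx⟩
      rfl
  rw [A, ← hS]
  exact key.trans (hcard ▸ Nat.ModEq.refl _)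

lemma root_subsingleton (m : ℕ) :
    Subsingleton {x : ℤ // 2 * (6 * x + 1) ^ 2 = (m : ℤ)} := by
  constructor
  rintro ⟨a, ha⟩ ⟨b, hb⟩
  have h2 : 2 * ((6 * a - 6 * b) * (6 * a + 6 * b + 2)) = 0 := by linear_combination ha - hb
  have h3 : (6 * a - 6 * b) * (6 * a + 6 * b + 2) = 0 := by omega
  rcases mul_eq_zero.mp h3 with h' | h'
  · have hab : a = b := by omega
    subst hab
    rfl
  · omega

theorem A_fourth_mul_modEq_two (n p : ℕ) (hn : n % 12 = 2) (hp : p.Prime)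
    (hcop : Nat.gcd p 6 = 1) :
    A (p ^ 4 * n) ≡ A n [MOD 2] := by
  -- p² ≡ 1 mod 6
  have h2p : ¬ (2 ∣ p) := by
    intro h
    have : 2 ∣ Nat.gcd p 6 := Nat.dvd_gcd h (by norm_num)
    omega
  have h3p : ¬ (3 ∣ p) := by
    intro h
    have : 3 ∣ Nat.gcd p 6 := Nat.dvd_gcd h (by norm_num)
    omega
  obtain ⟨k, hk⟩ : ∃ k : ℤ, (p : ℤ) ^ 2 = 6 * k + 1 := by
    have h6 : p % 6 = 1 ∨ p % 6 = 5 := by omega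
    have : p ^ 2 % 6 = 1 := by
      rw [Nat.pow_mod]
      rcases h6 with h | h <;> rw [h] <;> rfl
    obtain ⟨j, hj⟩ : ∃ j : ℕ, p ^ 2 = 6 * j + 1 := ⟨p ^ 2 / 6, by omega⟩
    exact ⟨(j : ℤ), by exact_mod_cast hj⟩
  -- nonempty transfer
  have hiff : Nonempty {x : ℤ // 2 * (6 * x + 1) ^ 2 = ((p ^ 4 * n : ℕ) : ℤ)} ↔
      Nonempty {x : ℤ // 2 * (6 * x + 1) ^ 2 = (n : ℤ)} := by
    constructor
    · rintro ⟨x', hx'⟩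
      push_cast at hx'
      -- p² ∣ 6x'+1
      have hq : Prime ((p : ℤ)) := Nat.prime_iff_prime_int.mp hp
      have hw0 : (6 * x' + 1 : ℤ) ≠ 0 := by intro h0; omega
      have hdvd24 : ((p : ℤ)) ^ 4 ∣ 2 * (6 * x' + 1) ^ 2 := ⟨(n : ℤ), by linarith [hx']⟩
      have hcop2 : IsCoprime ((p : ℤ) ^ 4) 2 := by
        apply IsCoprime.pow_left
        rw [Int.isCoprime_iff_gcd_eq_one, show (2:ℤ) = ((2:ℕ):ℤ) from rfl,
          Int.gcd_natCast_natCast]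
        exact ((Nat.prime_two.coprime_iff_not_dvd).mpr h2p).symm
      have hdvd4 : ((p : ℤ)) ^ 4 ∣ (6 * x' + 1) ^ 2 := by
        exact hcop2.dvd_of_dvd_mul_right (by rwa [mul_comm] at hdvd24)
      -- go to ℕ
      set w : ℕ := (6 * x' + 1 : ℤ).natAbs with hwdef
      have hw0' : w ≠ 0 := by simpa [hwdef, Int.natAbs_eq_zero] using hw0
      have hdvdn : p ^ 4 ∣ w ^ 2 := by
        have := Int.natAbs_dvd_natAbs.mpr hdvd4
        simpa [Int.natAbs_pow] using this
      have hple : p ^ 2 ∣ w := by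
        have hw2 : w ^ 2 ≠ 0 := pow_ne_zero _ hw0'
        have h4 := (Nat.Prime.pow_dvd_iff_le_factorization hp hw2).mp hdvdn
        rw [Nat.factorization_pow] at h4
        have h4' : 4 ≤ 2 * w.factorization p := by simpa using h4
        exact (Nat.Prime.pow_dvd_iff_le_factorization hp hw0').mpr (by omega)
      have hpz : ((p : ℤ)) ^ 2 ∣ (6 * x' + 1 : ℤ) := by
        rw [← Int.natAbs_dvd_natAbs, Int.natAbs_pow]
        simpa using hple
      obtain ⟨t, ht⟩ := hpz
      have hne : ((p : ℤ)) ^ 4 ≠ 0 := pow_ne_zero _ (by exact_mod_cast hp.ne_zero)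
      have htn : 2 * t ^ 2 = (n : ℤ) := by
        apply mul_left_cancel₀ hne
        linear_combination hx' - (2 * (6 * x' + 1 : ℤ) + 2 * (p:ℤ)^2 * t) * ht
      refine ⟨x' - k * t, ?_⟩
      have h6 : 6 * (x' - k * t) + 1 = t := by linear_combination ht + t * hk
      rw [h6]
      exact htn
    · rintro ⟨x, hx⟩
      refine ⟨6 * k * x + k + x, ?_⟩
      push_cast
      linear_combination (6*k+1)^2 * hx - ((n:ℤ) * ((p:ℤ)^2 + 6*k + 1)) * hk
  -- conclude
  have h1 := A_parity (p ^ 4 * n)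
  have h2 := (A_parity n).symm
  haveI := root_subsingleton (p ^ 4 * n)
  haveI := root_subsingleton n
  have hcardeq : Nat.card {x : ℤ // 2 * (6 * x + 1) ^ 2 = ((p ^ 4 * n : ℕ) : ℤ)} =
      Nat.card {x : ℤ // 2 * (6 * x + 1) ^ 2 = (n : ℤ)} := by
    rcases (em (Nonempty {x : ℤ // 2 * (6 * x + 1) ^ 2 = (n : ℤ)})) with hne | hne
    · have hne' := hiff.mpr hne
      obtain ⟨a⟩ := hne
      obtain ⟨b⟩ := hne'
      haveI : Unique {x : ℤ // 2 * (6 * x + 1) ^ 2 = ((p ^ 4 * n : ℕ) : ℤ)} := uniqueOfSubsingleton b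
      haveI : Unique {x : ℤ // 2 * (6 * x + 1) ^ 2 = (n : ℤ)} := uniqueOfSubsingleton a
      rw [Nat.card_unique, Nat.card_unique]
    · have hne' : ¬ Nonempty {x : ℤ // 2 * (6 * x + 1) ^ 2 = ((p ^ 4 * n : ℕ) : ℤ)} :=
        fun h => hne (hiff.mp h)
      rw [not_nonempty_iff] at hne hne'
      rw [Nat.card_of_isEmpty, Nat.card_of_isEmpty]
  exact h1.trans (hcardeq ▸ h2)
end

section
/- Suppose n ≡ 2 (mod 12). Then A(n) is odd if and only if n = 2m^2 for some integer m with gcd(m, 6) = 1. -/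
/-!
The involution `(x, y, z) ↦ (y, x, -z)` permutes the representations counted by `A n`, so `A n`
has the parity of its number of fixed points. These are the triples `(x, x, 0)` with
`n = 2 (6x + 1)²`, and there is at most one of them because `6x + 1` is determined by its
square (its sign is fixed by its residue mod 6). Finally, the integers `±(6x + 1)` are exactly
the integers prime to 6.
-/

theorem Set.Finite.ncard_modEq_ncard_inter_fixedPoints {α : Type*} {s : Set α} (hs : s.Finite)
    {f : α → α} (hf : Function.Involutive f) (hfs : Set.MapsTo f s s) :
    s.ncard ≡ (s ∩ Function.fixedPoints f).ncard [MOD 2] := by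
  classical
  have := hs.fintype
  let g : Function.End s := hfs.restrict
  have hg : g ^ 2 ^ 1 = 1 := funext fun x => Subtype.ext (hf x)
  convert Equiv.Perm.card_fixedPoints_modEq hg using 1
  · rw [← Nat.card_eq_fintype_card, Nat.card_coe_set_eq]
  · rw [← Nat.card_eq_fintype_card, ← Nat.card_coe_set_eq]
    exact Nat.card_congr
      ((Equiv.subtypeSubtypeEquivSubtypeInter (· ∈ s) (· ∈ Function.fixedPoints f)).symm.trans
        (Equiv.subtypeEquivRight fun x => (Subtype.ext_iff (a1 := g x) (a2 := x)).symm))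

theorem Set.Subsingleton.odd_ncard_iff {α : Type*} {s : Set α} (hs : s.Subsingleton) :
    Odd s.ncard ↔ s.Nonempty := by
  rcases hs.eq_empty_or_singleton with rfl | ⟨a, rfl⟩ <;> simp

theorem Int.gcd_six_eq_one_iff (m : ℤ) : m.gcd 6 = 1 ↔ m % 6 = 1 ∨ m % 6 = 5 := by
  rw [← Int.gcd_emod]
  have h0 : 0 ≤ m % 6 := Int.emod_nonneg m (by norm_num)
  have h6 : m % 6 < 6 := Int.emod_lt_of_pos m (by norm_num)
  generalize m % 6 = r at h0 h6
  interval_cases r <;> decide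

theorem Int.eq_of_sq_six_mul_add_one_eq {a b : ℤ} (h : (6 * a + 1) ^ 2 = (6 * b + 1) ^ 2) :
    a = b := by
  rcases sq_eq_sq_iff_eq_or_eq_neg.mp h with h | h <;> omega

theorem Int.exists_two_mul_six_mul_add_one_sq_eq_iff (n : ℤ) :
    (∃ x, 2 * (6 * x + 1) ^ 2 = n) ↔ ∃ m : ℤ, n = 2 * m ^ 2 ∧ m.gcd 6 = 1 := by
  constructor
  · rintro ⟨x, hx⟩
    exact ⟨6 * x + 1, hx.symm, (Int.gcd_six_eq_one_iff _).mpr (by omega)⟩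
  · rintro ⟨m, rfl, hm⟩
    rcases (Int.gcd_six_eq_one_iff m).mp hm with h | h
    · exact ⟨m / 6, by congr 2; omega⟩
    · exact ⟨-(m / 6) - 1, by rw [← neg_sq m]; congr 2; omega⟩

namespace A

open Function Set

def reprs (n : ℤ) : Set (ℤ × ℤ × ℤ) :=
  {t | (6 * t.1 + 1) ^ 2 + (6 * t.2.1 + 1) ^ 2 + 12 * t.2.2 ^ 2 = n}

def reprSwap (t : ℤ × ℤ × ℤ) : ℤ × ℤ × ℤ := (t.2.1, t.1, -t.2.2)

theorem eq_ncard_reprs (n : ℕ) : A n = (reprs n).ncard := rfl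

theorem reprs_finite (n : ℤ) : (reprs n).Finite := by
  refine ((finite_Icc (-n) n).prod ((finite_Icc (-n) n).prod (finite_Icc (-n) n))).subset ?_
  rintro ⟨x, y, z⟩ (h : _ = n)
  simp only [mem_prod, mem_Icc]
  refine ⟨⟨?_, ?_⟩, ⟨?_, ?_⟩, ⟨?_, ?_⟩⟩ <;>
    nlinarith [Int.le_self_sq x, Int.le_self_sq (-x), Int.le_self_sq y, Int.le_self_sq (-y),
      Int.le_self_sq z, Int.le_self_sq (-z), sq_nonneg (6 * x + 1), sq_nonneg (6 * y + 1)]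

theorem reprSwap_involutive : Involutive reprSwap := fun t => by simp [reprSwap]

theorem mapsTo_reprSwap (n : ℤ) : MapsTo reprSwap (reprs n) (reprs n) :=
  fun _ (ht : _ = n) => by
    simp only [reprs, reprSwap, mem_ofPred_eq]
    linear_combination ht

theorem mem_fixedPoints_reprSwap {t : ℤ × ℤ × ℤ} :
    t ∈ fixedPoints reprSwap ↔ t.2.1 = t.1 ∧ t.2.2 = 0 := by
  obtain ⟨x, y, z⟩ := t
  simp only [mem_fixedPoints, IsFixedPt, reprSwap, Prod.mk.injEq]
  omega

theorem reprs_inter_fixedPoints_reprSwap (n : ℤ) :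
    reprs n ∩ fixedPoints reprSwap = (fun x => (x, x, 0)) '' {x | 2 * (6 * x + 1) ^ 2 = n} := by
  ext ⟨x, y, z⟩
  simp only [mem_inter_iff, mem_fixedPoints_reprSwap, reprs, mem_ofPred_eq, mem_image,
    Prod.mk.injEq]
  constructor
  · rintro ⟨h, rfl, rfl⟩
    exact ⟨y, by linear_combination h, rfl, rfl, rfl⟩
  · rintro ⟨x, h, rfl, rfl, rfl⟩
    exact ⟨by linear_combination h, rfl, rfl⟩

theorem subsingleton_two_mul_six_mul_add_one_sq_eq (n : ℤ) :
    {x : ℤ | 2 * (6 * x + 1) ^ 2 = n}.Subsingleton :=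
  fun _ ha _ hb => Int.eq_of_sq_six_mul_add_one_eq (mul_left_cancel₀ two_ne_zero (ha.trans hb.symm))

end A

theorem A_odd_iff_general (n : ℕ) :
    Odd (A n) ↔ ∃ m : ℤ, (n : ℤ) = 2 * m ^ 2 ∧ Int.gcd m 6 = 1 := by
  rw [A.eq_ncard_reprs, Nat.odd_iff,
    (A.reprs_finite n).ncard_modEq_ncard_inter_fixedPoints A.reprSwap_involutive
      (A.mapsTo_reprSwap n),
    ← Nat.odd_iff, A.reprs_inter_fixedPoints_reprSwap,
    ((A.subsingleton_two_mul_six_mul_add_one_sq_eq n).image _).odd_ncard_iff, Set.image_nonempty,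
    ← Int.exists_two_mul_six_mul_add_one_sq_eq_iff]
  rfl

theorem A_odd_iff (n : ℕ) (hn : n % 12 = 2) :
    Odd (A n) ↔ ∃ m : ℤ, (n : ℤ) = 2 * m ^ 2 ∧ Int.gcd m 6 = 1 :=
  A_odd_iff_general n
end

section
/- For every nonnegative integer n, let S_n = { (x, y, z) ∈ ℤ^3 : x^2 + (3y^2 − y) + (3z^2 − z) = n } (a finite set). Then the signed count b(n) = ∑_{(x,y,z) ∈ S_n} (−1)^{x+y+z} satisfies b(n) ≡ #S_n (mod 4). Equivalently, the coefficients of (∑_{n∈ℤ} q^{n^2})(∑_{n∈ℤ} q^{3n^2−n})^2 and (∑_{n∈ℤ} (−1)^n q^{n^2})(∑_{n∈ℤ} (−1)^n q^{3n^2−n})^2 agree modulo 4. -/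
theorem signed_count_modEq_count (n : ℕ) (S : Finset (ℤ × ℤ × ℤ))
    (hS : ∀ t : ℤ × ℤ × ℤ,
      t ∈ S ↔ t.1 ^ 2 + (3 * t.2.1 ^ 2 - t.2.1) + (3 * t.2.2 ^ 2 - t.2.2) = (n : ℤ)) :
    (∑ t ∈ S, ((t.1 + t.2.1 + t.2.2).negOnePow : ℤ)) ≡ (S.card : ℤ) [ZMOD 4] := by
  classical
  set O : Finset (ℤ × ℤ × ℤ) := S.filter (fun t => Odd (t.1 + t.2.1 + t.2.2)) with hO
  -- O has a fixed-point-free involution (x,y,z) ↦ (-x,z,y), so its card is even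
  have hOmem : ∀ t : ℤ × ℤ × ℤ, t ∈ O ↔ t ∈ S ∧ Odd (t.1 + t.2.1 + t.2.2) := by
    intro t; simp [hO]
  have hinv : ∀ t ∈ O, ((-t.1, t.2.2, t.2.1) : ℤ × ℤ × ℤ) ∈ O := by
    intro t ht
    rcases (hOmem t).1 ht with ⟨htS, hodd⟩
    refine (hOmem _).2 ⟨(hS _).2 ?_, ?_⟩
    · have := (hS t).1 htS
      simpa using by linarith [this, sq_nonneg t.1]
    · simp only
      have : -t.1 + t.2.2 + t.2.1 = (t.1 + t.2.1 + t.2.2) + (-2 * t.1) := by ring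
      rw [this]
      exact hodd.add_even ⟨-t.1, by ring⟩
  have heven : Even O.card := by
    have h2 : ((O.card : ZMod 2)) = 0 := by
      have : (∑ _t ∈ O, (1 : ZMod 2)) = 0 := by
        apply Finset.sum_involution (fun t _ => ((-t.1, t.2.2, t.2.1) : ℤ × ℤ × ℤ))
        · intro t ht; decide
        · intro t ht _ h
          rcases (hOmem t).1 ht with ⟨_, hodd⟩
          have h1 : -t.1 = t.1 := congrArg Prod.fst h
          have hx : t.1 = 0 := by linarith
          have h2 : t.2.2 = t.2.1 := congrArg (fun p => p.2.1) h
          rw [hx, h2] at hodd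
          rw [Int.odd_iff] at hodd
          omega
        · exact hinv
        · intro t ht; simp
      simpa using this
    exact even_iff_two_dvd.2 ((ZMod.natCast_eq_zero_iff O.card 2).1 h2)
  -- the sum equals card S - 2 * card O
  have hsum : (∑ t ∈ S, ((t.1 + t.2.1 + t.2.2).negOnePow : ℤ))
      = (S.card : ℤ) - 2 * O.card := by
    rw [← Finset.sum_filter_add_sum_filter_not S (fun t => Odd (t.1 + t.2.1 + t.2.2))]
    have e1 : ∀ t ∈ S.filter (fun t => Odd (t.1 + t.2.1 + t.2.2)),
        ((t.1 + t.2.1 + t.2.2).negOnePow : ℤ) = -1 := by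
      intro t ht
      rw [Int.negOnePow_odd _ (Finset.mem_filter.1 ht).2]; simp
    have e2 : ∀ t ∈ S.filter (fun t => ¬ Odd (t.1 + t.2.1 + t.2.2)),
        ((t.1 + t.2.1 + t.2.2).negOnePow : ℤ) = 1 := by
      intro t ht
      rw [Int.negOnePow_even _ (Int.not_odd_iff_even.1 (Finset.mem_filter.1 ht).2)]; simp
    rw [Finset.sum_congr rfl e1, Finset.sum_congr rfl e2, Finset.sum_const, Finset.sum_const]
    have hc : O.card + (S.filter (fun t => ¬ Odd (t.1 + t.2.1 + t.2.2))).card = S.card := by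
      rw [hO]; exact Finset.card_filter_add_card_filter_not _
    have := congrArg (fun k : ℕ => (k : ℤ)) hc
    simp only [nsmul_eq_mul, mul_one, mul_neg_one]
    push_cast at this ⊢
    rw [hO] at this ⊢
    linarith
  rw [hsum]
  obtain ⟨k, hk⟩ := heven
  have hk' : (O.card : ℤ) = k + k := by exact_mod_cast hk
  have : (S.card : ℤ) - 2 * O.card = (S.card : ℤ) + -(k : ℤ) * 4 := by rw [hk']; ring
  rw [this]
  exact Int.ModEq.symm (Int.modEq_iff_dvd.2 ⟨-(k : ℤ), by push_cast; ring⟩)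
end
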